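/- arXiv:1604.06178 — 11 statements merged into one kernel-verified Lean document; each statement's English description precedes it below -/
import Mathlib

section
/- Let X be a topological space, A = {a_n : n ∈ ℕ} a countable subset of X, Y a compact Hausdorff space, and f : X × Y → ℝ a separately continuous function such that the continuous mapping φ : Y → C_p(A) defined by φ(y)(a) = f(a,y) is a homeomorphic embedding, and such that for every n ∈ ℕ there exist y'_n, y''_n ∈ Y with |f(a_k, y'_n) − f(a_k, y''_n)| ≤ 1/(n+1) for all k = 1, …, n and |f(a_k, y'_n) − f(a_k, y''_n)| ≥ 1 for all k > n. Then A is strongly functionally discrete in X. -/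
/-!
Put `u n x = |f (x, y'ₙ) - f (x, y''ₙ)|`. A cluster point of `(y'ₙ, y''ₙ)` in the compact space
`Y × Y` lies on the diagonal, since `φ` is injective and `u n (a k) → 0` for each `k`; hence at
every `x` some `u n x` is below `3/4`. As `u m (a n) ≥ 1` for `m ≤ n` and `u (n + 1) (a n) ≤ 1/2`,
the cozero sets `{u m > 3/4 for all m ≤ n, u (n + 1) < 2/3}` contain `a n`, and the first drop of
`u · x` below `3/4` makes them a discrete family.
-/

open Set Topology

open Filter

/-- `C_p(X)`: the continuous real-valued functions on `X`, topologized by pointwise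
convergence (i.e. as a subspace of `X → ℝ` with the product topology). -/
abbrev Cp (X : Type*) [TopologicalSpace X] : Type _ := {f : X → ℝ // Continuous f}

/-- `C_p*(X)`: the bounded continuous real-valued functions on `X`, topologized by
pointwise convergence. -/
abbrev CpStar (X : Type*) [TopologicalSpace X] : Type _ :=
  {f : X → ℝ // Continuous f ∧ ∃ M : ℝ, ∀ x, |f x| ≤ M}

/-- A set is functionally open (a cozero set) if it is the cozero set of a
continuous real-valued function. -/
def FunctionallyOpen {X : Type*} [TopologicalSpace X] (U : Set X) : Prop :=
  ∃ f : X → ℝ, Continuous f ∧ U = f ⁻¹' ({0}ᶜ)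

/-- A subset `A` is strongly functionally discrete in `X` if there is a family of
functionally open sets `G a ∋ a` (for `a ∈ A`) which is discrete in `X`: every point
of `X` has a neighborhood meeting `G a` for at most one `a ∈ A`. -/
def StronglyFunctionallyDiscrete {X : Type*} [TopologicalSpace X] (A : Set X) : Prop :=
  ∃ G : A → Set X,
    (∀ a : A, (a : X) ∈ G a) ∧
    (∀ a : A, FunctionallyOpen (G a)) ∧
    (∀ x : X, ∃ V ∈ 𝓝 x, {a : A | (V ∩ G a).Nonempty}.Subsingleton)

section FunctionallyOpen

variable {X : Type*} [TopologicalSpace X]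

theorem functionallyOpen_setOf_lt {g : X → ℝ} (hg : Continuous g) (c : ℝ) :
    FunctionallyOpen {z | c < g z} := by
  refine ⟨fun z => max (g z - c) 0, (hg.sub continuous_const).max continuous_const, ?_⟩
  ext z
  simp

theorem functionallyOpen_setOf_gt {g : X → ℝ} (hg : Continuous g) (c : ℝ) :
    FunctionallyOpen {z | g z < c} := by
  simpa only [neg_lt_neg_iff] using functionallyOpen_setOf_lt (g := fun z => -g z) hg.neg (-c)

theorem FunctionallyOpen.inter {U V : Set X} (hU : FunctionallyOpen U) (hV : FunctionallyOpen V) :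
    FunctionallyOpen (U ∩ V) := by
  obtain ⟨g, hg, rfl⟩ := hU
  obtain ⟨h, hh, rfl⟩ := hV
  exact ⟨g * h, hg.mul hh, by ext; simp⟩

theorem FunctionallyOpen.biInter_finset {ι : Type*} {U : ι → Set X}
    (hU : ∀ i, FunctionallyOpen (U i)) (s : Finset ι) : FunctionallyOpen (⋂ i ∈ s, U i) := by
  choose g hg hgU using hU
  refine ⟨fun z => ∏ i ∈ s, g i z, continuous_finsetProd s fun i _ => hg i, ?_⟩
  ext z
  simp [hgU, Finset.prod_ne_zero_iff]

end FunctionallyOpen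

theorem stronglyFunctionallyDiscrete_range {X : Type*} [TopologicalSpace X] {a : ℕ → X}
    {G : ℕ → Set X} (hmem : ∀ n, a n ∈ G n) (hG : ∀ n, FunctionallyOpen (G n))
    (hdisc : ∀ x, ∃ V ∈ 𝓝 x, {n | (V ∩ G n).Nonempty}.Subsingleton) :
    StronglyFunctionallyDiscrete (range a) := by
  choose idx hidx using fun p : range a => p.2
  have hinj : Function.Injective idx := fun p q h => Subtype.ext <| by rw [← hidx p, ← hidx q, h]
  refine ⟨fun p => G (idx p), fun p => hidx p ▸ hmem _, fun p => hG _, fun x => ?_⟩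
  obtain ⟨V, hV, hsub⟩ := hdisc x
  exact ⟨V, hV, hsub.preimage hinj⟩

section DropSet

variable {X : Type*} [TopologicalSpace X]

def dropSet (u : ℕ → X → ℝ) (r s : ℝ) (n : ℕ) : Set X :=
  {z | (∀ m ≤ n, s < u m z) ∧ u (n + 1) z < r}

theorem functionallyOpen_dropSet {u : ℕ → X → ℝ} (hu : ∀ n, Continuous (u n)) (r s : ℝ)
    (n : ℕ) : FunctionallyOpen (dropSet u r s n) := by
  have h : dropSet u r s n = (⋂ m ∈ Finset.Iic n, {z | s < u m z}) ∩ {z | u (n + 1) z < r} := by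
    ext z
    simp [dropSet]
  rw [h]
  exact (FunctionallyOpen.biInter_finset (fun m => functionallyOpen_setOf_lt (hu m) s) _).inter
    (functionallyOpen_setOf_gt (hu _) r)

/-- If `n₀` is the first index with `u n₀ x < s`, then on a neighbourhood of `x` we still have
`u n₀ < s` and `u m > r` for `m < n₀`, which rules out every `dropSet` except the `(n₀ - 1)`-st. -/
theorem exists_mem_nhds_subsingleton_dropSet {u : ℕ → X → ℝ} (hu : ∀ n, Continuous (u n))
    {r s : ℝ} (hrs : r < s) {x : X} (hx : ∃ n, u n x < s) :
    ∃ V ∈ 𝓝 x, {n | (V ∩ dropSet u r s n).Nonempty}.Subsingleton := by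
  classical
  set n₀ := Nat.find hx
  set V := {z | u n₀ z < s ∧ ∀ m < n₀, r < u m z}
  have hV : V ∈ 𝓝 x := by
    have hbelow : ∀ᶠ z in 𝓝 x, u n₀ z < s :=
      (hu n₀).continuousAt.eventually_lt continuousAt_const (Nat.find_spec hx)
    have habove : ∀ᶠ z in 𝓝 x, ∀ m < n₀, r < u m z :=
      (eventually_all_finite (finite_lt_nat n₀)).2 fun m hm =>
        continuousAt_const.eventually_lt (hu m).continuousAt
          (hrs.trans_le (not_lt.1 (Nat.find_min hx hm)))
    exact hbelow.and habove
  have hidx : ∀ n, (V ∩ dropSet u r s n).Nonempty → n + 1 = n₀ := by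
    rintro n ⟨z, ⟨hz₀, hzm⟩, hzn, hzn'⟩
    have hlt : n < n₀ := lt_of_not_ge fun h => (hzn n₀ h).not_gt hz₀
    have hge : ¬ n + 1 < n₀ := fun h => (hzm _ h).not_gt hzn'
    omega
  exact ⟨V, hV, fun n hn n' hn' => by have := hidx n hn; have := hidx n' hn'; omega⟩

end DropSet

/-- The pairs `(p n, q n)` cluster at a point of the diagonal. -/
theorem frequently_abs_sub_lt_of_tendsto_sub {Y ι : Type*} [TopologicalSpace Y] [CompactSpace Y]
    {φ : ι → Y → ℝ} (hφ : ∀ i, Continuous (φ i)) (hsep : Function.Injective fun y i => φ i y)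
    {p q : ℕ → Y} (hpq : ∀ i, Tendsto (fun n => φ i (p n) - φ i (q n)) atTop (𝓝 0))
    {g : Y → ℝ} (hg : Continuous g) {ε : ℝ} (hε : 0 < ε) :
    ∃ᶠ n in atTop, |g (p n) - g (q n)| < ε := by
  obtain ⟨c, -, hc⟩ := isCompact_univ.exists_mapClusterPt (le_principal_iff.2 univ_mem)
    (f := atTop) (u := fun n => (p n, q n))
  have hcomp : ∀ h : Y → ℝ, Continuous h →
      MapClusterPt (h c.1 - h c.2) atTop fun n => h (p n) - h (q n) := fun h hh =>
    hc.continuousAt_comp ((hh.comp continuous_fst).sub (hh.comp continuous_snd)).continuousAt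
  have hdiag : c.1 = c.2 := hsep <| funext fun i =>
    sub_eq_zero.1 <| eq_of_nhds_neBot ((hcomp (φ i) (hφ i)).clusterPt.mono (hpq i))
  have hg0 := hcomp g hg
  rw [hdiag, sub_self] at hg0
  exact hg0.frequently (p := fun v => |v| < ε)
    (continuous_abs.continuousAt.eventually_lt continuousAt_const (by simpa using hε))

theorem stmt_1_general {X Y : Type*} [TopologicalSpace X] [TopologicalSpace Y]
    [CompactSpace Y]
    (a : ℕ → X) (A : Set X) (hA : A = Set.range a)
    (f : X × Y → ℝ)
    (hsep₁ : ∀ x : X, Continuous fun y : Y => f (x, y))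
    (hsep₂ : ∀ y : Y, Continuous fun x : X => f (x, y))
    (hemb : IsEmbedding fun y : Y =>
      (⟨fun p : A => f (p.1, y),
        (hsep₂ y).comp continuous_subtype_val⟩ : Cp A))
    (hsplit : ∀ n : ℕ, ∃ y' y'' : Y,
      (∀ k < n, |f (a k, y') - f (a k, y'')| ≤ 1 / (n + 1)) ∧
      (∀ k ≥ n, 1 ≤ |f (a k, y') - f (a k, y'')|)) :
    StronglyFunctionallyDiscrete A := by
  subst hA
  choose y' y'' hclose hfar using hsplit
  set u : ℕ → X → ℝ := fun n x => |f (x, y' n) - f (x, y'' n)|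
  have hu : ∀ n, Continuous (u n) := fun n => ((hsep₂ (y' n)).sub (hsep₂ (y'' n))).abs
  have hinj : Function.Injective fun (y : Y) (p : range a) => f (p.1, y) :=
    fun y z h => hemb.injective (Subtype.ext h)
  have htend : ∀ p : range a,
      Tendsto (fun n => f (p.1, y' n) - f (p.1, y'' n)) atTop (𝓝 0) := by
    rintro ⟨_, k, rfl⟩
    refine squeeze_zero_norm' ?_ tendsto_one_div_add_atTop_nhds_zero_nat
    filter_upwards [eventually_gt_atTop k] with n hn using hclose n k hn
  have hsmall : ∀ x, ∃ n, u n x < 3 / 4 := fun x =>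
    (frequently_abs_sub_lt_of_tendsto_sub (fun p : range a => hsep₁ p.1) hinj htend (hsep₁ x)
      (by norm_num)).exists
  refine stronglyFunctionallyDiscrete_range (G := dropSet u (2 / 3) (3 / 4)) (fun n => ⟨?_, ?_⟩)
    (functionallyOpen_dropSet hu _ _)
    (fun x => exists_mem_nhds_subsingleton_dropSet hu (by norm_num) (hsmall x))
  · exact fun m hm => (by norm_num : (3 / 4 : ℝ) < 1).trans_le (hfar m n hm)
  · calc u (n + 1) (a n) ≤ 1 / ((n + 1 : ℕ) + 1 : ℝ) := hclose (n + 1) n n.lt_succ_self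
      _ ≤ 1 / 2 := by gcongr; norm_cast; omega
      _ < 2 / 3 := by norm_num

/-- Proposition 2.1: if `Y` is compact Hausdorff, `f : X × Y → ℝ` is separately
continuous, the induced map `Y → C_p(A)` is a homeomorphic embedding, and the
splitting condition holds, then `A = {a_n : n ∈ ℕ}` is strongly functionally
discrete in `X`. -/
theorem stmt_1 {X Y : Type*} [TopologicalSpace X] [TopologicalSpace Y]
    [CompactSpace Y] [T2Space Y]
    (a : ℕ → X) (A : Set X) (hA : A = Set.range a)
    (f : X × Y → ℝ)
    (hsep₁ : ∀ x : X, Continuous fun y : Y => f (x, y))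
    (hsep₂ : ∀ y : Y, Continuous fun x : X => f (x, y))
    (hemb : IsEmbedding fun y : Y =>
      (⟨fun p : A => f (p.1, y),
        (hsep₂ y).comp continuous_subtype_val⟩ : Cp A))
    (hsplit : ∀ n : ℕ, ∃ y' y'' : Y,
      (∀ k < n, |f (a k, y') - f (a k, y'')| ≤ 1 / (n + 1)) ∧
      (∀ k ≥ n, 1 ≤ |f (a k, y') - f (a k, y'')|)) :
    StronglyFunctionallyDiscrete A :=
  stmt_1_general a A hA f hsep₁ hsep₂ hemb hsplit
end

section
/- Let X be a topological space and A ⊆ X a countable subset which is discrete in its subspace topology. If there exists a continuous mapping φ : C_p*(A) → C_p(X) with φ(y)|_A = y for every y ∈ C_p*(A), then A is strongly functionally discrete in X. -/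
open Set Topology Filter

/-!
Enumerate `A` injectively by `ι : A → ℕ` and let `y k ∈ C_p*(A)` be the indicator of
`{a | k ≤ ι a}`. Then `y k → 0` pointwise, so by continuity of `φ` the continuous functions
`σ k = φ (y k) - φ 0` tend to `0` pointwise on `X`, while `σ k a = [k ≤ ι a]` on `A`.
Take `G a = {x | σ k x > 2/3 for all k ≤ ι a, and σ (ι a + 1) x < 1/3}`. For `x ∈ X` let `m`
be the first index with `σ m x < 1/2`; near `x` we have `σ k > 1/3` for `k < m` and
`σ m < 2/3`, and this forces `ι a + 1 = m` for every `G a` meeting that neighbourhood.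
-/

namespace FunctionallyOpen

variable {X : Type*} [TopologicalSpace X]

theorem univ : FunctionallyOpen (Set.univ : Set X) :=
  ⟨fun _ => 1, continuous_const, by ext; simp⟩

theorem inter_s2 {U V : Set X} (hU : FunctionallyOpen U) (hV : FunctionallyOpen V) :
    FunctionallyOpen (U ∩ V) := by
  obtain ⟨f, hf, rfl⟩ := hU
  obtain ⟨g, hg, rfl⟩ := hV
  exact ⟨f * g, hf.mul hg, by ext; simp⟩

theorem biInter_finset_s2 {ι : Type*} (s : Finset ι) {U : ι → Set X}
    (hU : ∀ i ∈ s, FunctionallyOpen (U i)) : FunctionallyOpen (⋂ i ∈ s, U i) := by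
  classical
  induction s using Finset.induction_on with
  | empty => simpa using univ
  | insert i s _ ih =>
    rw [Finset.set_biInter_insert]
    exact (hU i (s.mem_insert_self i)).inter_s2
      (ih fun j hj => hU j (Finset.mem_insert_of_mem hj))

end FunctionallyOpen

section Preimage

variable {X : Type*} [TopologicalSpace X] {f : X → ℝ}

theorem Continuous.functionallyOpen_preimage_Ioi (hf : Continuous f) (c : ℝ) :
    FunctionallyOpen (f ⁻¹' Ioi c) := by
  refine ⟨fun x => max (f x - c) 0, (hf.sub continuous_const).max continuous_const, ?_⟩
  ext x
  simp

theorem Continuous.functionallyOpen_preimage_Iio (hf : Continuous f) (c : ℝ) :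
    FunctionallyOpen (f ⁻¹' Iio c) := by
  convert hf.neg.functionallyOpen_preimage_Ioi (-c) using 1
  ext x
  simp

end Preimage

section ThresholdSet

variable {X : Type*} {σ : ℕ → X → ℝ}

def thresholdSet (σ : ℕ → X → ℝ) (n : ℕ) : Set X :=
  (⋂ k ∈ Finset.range (n + 1), σ k ⁻¹' Ioi (2 / 3)) ∩ σ (n + 1) ⁻¹' Iio (1 / 3)

theorem mem_thresholdSet {n : ℕ} {x : X} :
    x ∈ thresholdSet σ n ↔ (∀ k ≤ n, 2 / 3 < σ k x) ∧ σ (n + 1) x < 1 / 3 := by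
  simp [thresholdSet]

theorem succ_eq_of_mem_thresholdSet {m n : ℕ} {z : X} (hlt : ∀ k < m, 1 / 3 < σ k z)
    (hm : σ m z < 2 / 3) (hz : z ∈ thresholdSet σ n) : n + 1 = m := by
  obtain ⟨hle, hsucc⟩ := mem_thresholdSet.mp hz
  have hnm : n < m := by
    by_contra! h
    linarith [hle m h]
  have hmn : ¬ n + 1 < m := fun h => by linarith [hlt _ h]
  omega

variable [TopologicalSpace X]

theorem functionallyOpen_thresholdSet (hσ : ∀ k, Continuous (σ k)) (n : ℕ) :
    FunctionallyOpen (thresholdSet σ n) :=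
  (FunctionallyOpen.biInter_finset_s2 _ fun k _ => (hσ k).functionallyOpen_preimage_Ioi _).inter_s2
    ((hσ (n + 1)).functionallyOpen_preimage_Iio _)

theorem eventually_succ_eq_of_mem_thresholdSet (hσ : ∀ k, Continuous (σ k)) {x : X} {m : ℕ}
    (hlt : ∀ k < m, 1 / 2 ≤ σ k x) (hm : σ m x < 1 / 2) :
    ∀ᶠ z in 𝓝 x, ∀ n, z ∈ thresholdSet σ n → n + 1 = m := by
  have hbelow : ∀ᶠ z in 𝓝 x, σ m z < 2 / 3 :=
    (hσ m).continuousAt.eventually_lt_const (by linarith)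
  have habove : ∀ᶠ z in 𝓝 x, ∀ k ∈ Finset.range m, 1 / 3 < σ k z := by
    refine (eventually_all_finset _).mpr fun k hk => ?_
    exact (hσ k).continuousAt.eventually_const_lt (by linarith [hlt k (Finset.mem_range.mp hk)])
  filter_upwards [hbelow, habove] with z hzm hzk n hz
  exact succ_eq_of_mem_thresholdSet (fun k hk => hzk k (Finset.mem_range.mpr hk)) hzm hz

theorem stronglyFunctionallyDiscrete_of_tendsto_zero {A : Set X} (ι : A → ℕ)
    (hι : Function.Injective ι) (hσ : ∀ k, Continuous (σ k))
    (hσA : ∀ k (a : A), σ k a = if k ≤ ι a then 1 else 0)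
    (hσ0 : ∀ x, Tendsto (fun k => σ k x) atTop (𝓝 0)) :
    StronglyFunctionallyDiscrete A := by
  refine ⟨fun a => thresholdSet σ (ι a), fun a => ?_,
    fun a => functionallyOpen_thresholdSet hσ (ι a), fun x => ?_⟩
  · exact mem_thresholdSet.mpr ⟨fun k hk => by norm_num [hσA, hk], by norm_num [hσA]⟩
  · have hex : ∃ k, σ k x < 1 / 2 := ((hσ0 x).eventually (gt_mem_nhds (by norm_num))).exists
    have hfirst : ∀ k < Nat.find hex, 1 / 2 ≤ σ k x := fun k hk => not_lt.mp (Nat.find_min hex hk)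
    refine ⟨_, eventually_succ_eq_of_mem_thresholdSet hσ hfirst (Nat.find_spec hex), ?_⟩
    rintro a ⟨z, hza, hzGa⟩ b ⟨z', hzb, hzGb⟩
    exact hι (Nat.succ_injective ((hza _ hzGa).trans (hzb _ hzGb).symm))

end ThresholdSet

section Extender

variable {A X : Type*} [TopologicalSpace A] [TopologicalSpace X]

def tailIndicator [DiscreteTopology A] (ι : A → ℕ) (k : ℕ) : CpStar A :=
  ⟨fun a => if k ≤ ι a then 1 else 0, continuous_of_discreteTopology, 1,
    fun a => by dsimp only; split_ifs <;> norm_num⟩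

theorem tendsto_tailIndicator_apply [DiscreteTopology A] (ι : A → ℕ) (a : A) :
    Tendsto (fun k => (tailIndicator ι k).1 a) atTop (𝓝 0) := by
  refine tendsto_const_nhds.congr' ?_
  filter_upwards [eventually_gt_atTop (ι a)] with k hk
  simp [tailIndicator, not_le.mpr hk]

theorem tendsto_apply_of_continuous_of_tendsto_apply {φ : CpStar A → Cp X} (hφ : Continuous φ)
    {β : Type*} {l : Filter β} {y : β → CpStar A} {y₀ : CpStar A}
    (hy : ∀ a, Tendsto (fun k => (y k).1 a) l (𝓝 (y₀.1 a))) (x : X) :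
    Tendsto (fun k => (φ (y k)).1 x) l (𝓝 ((φ y₀).1 x)) := by
  have hy' : Tendsto y l (𝓝 y₀) := tendsto_subtype_rng.mpr (tendsto_pi_nhds.mpr hy)
  exact ((continuous_apply x).comp continuous_subtype_val).continuousAt.tendsto.comp
    (hφ.continuousAt.tendsto.comp hy')

end Extender

/-- If `A` is a countable discrete subspace of `X` and there is a continuous extender
`φ : C_p*(A) → C_p(X)`, then `A` is strongly functionally discrete in `X`. -/
theorem stmt_2 {X : Type*} [TopologicalSpace X] (A : Set X)
    (hcount : A.Countable) (hdisc : DiscreteTopology A)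
    (φ : CpStar A → Cp X) (hφ : Continuous φ)
    (hext : ∀ y : CpStar A, ∀ a : A, (φ y).1 a = y.1 a) :
    StronglyFunctionallyDiscrete A := by
  obtain ⟨ι, hι⟩ := Set.countable_iff_exists_injective.mp hcount
  let zero : CpStar A := ⟨0, continuous_const, 0, by simp⟩
  refine stronglyFunctionallyDiscrete_of_tendsto_zero (σ := fun k x =>
      (φ (tailIndicator ι k)).1 x - (φ zero).1 x) ι hι
    (fun k => (φ _).2.sub (φ _).2) (fun k a => by simp [hext, tailIndicator, zero])
    (fun x => ?_)
  simpa using (tendsto_apply_of_continuous_of_tendsto_apply hφ (y₀ := zero)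
    (tendsto_tailIndicator_apply ι) x).sub_const ((φ zero).1 x)
end

section
/- Let X be a topological space and A ⊆ X a countable subset which is discrete in its subspace topology. If A is strongly functionally discrete in X, then there exists a linear continuous mapping φ : C_p*(A) → C_p*(X) such that φ(y)|_A = y for every y ∈ C_p*(A). -/
open Set Topology

/-- If a countable discrete subspace `A` of `X` is strongly functionally discrete
in `X`, then there is a linear continuous extender `φ : C_p*(A) → C_p*(X)`. -/
theorem stmt_3 {X : Type*} [TopologicalSpace X] (A : Set X)
    (hcount : A.Countable) (hdisc : DiscreteTopology A)
    (hsfd : StronglyFunctionallyDiscrete A) :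
    ∃ φ : CpStar A → CpStar X, Continuous φ ∧
      (∀ (c d : ℝ) (y z w : CpStar A), (∀ a : A, w.1 a = c * y.1 a + d * z.1 a) →
        ∀ x : X, (φ w).1 x = c * (φ y).1 x + d * (φ z).1 x) ∧
      (∀ y : CpStar A, ∀ a : A, (φ y).1 a = y.1 a) := by
  classical
  obtain ⟨G, hmem, hopen, hdis⟩ := hsfd
  choose f hf hGf using hopen
  -- bump functions
  set g : A → X → ℝ := fun a x => min 1 (|f a x| / |f a a|) with hgdef
  have hgc : ∀ a, Continuous (g a) := fun a =>
    continuous_const.min ((hf a).abs.div_const _)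
  have hga : ∀ a : A, g a a = 1 := by
    intro a
    have hne : f a a ≠ 0 := by
      have := hmem a; rw [hGf a] at this; simpa using this
    simp [hgdef, div_self (abs_ne_zero.mpr hne)]
  have hg0 : ∀ (a : A) (x : X), x ∉ G a → g a x = 0 := by
    intro a x hx
    have : f a x = 0 := by rw [hGf a] at hx; simpa using hx
    simp [hgdef, this]
  have hgnn : ∀ (a : A) (x : X), 0 ≤ g a x := fun a x =>
    le_min zero_le_one (div_nonneg (abs_nonneg _) (abs_nonneg _))
  have hgle : ∀ (a : A) (x : X), g a x ≤ 1 := fun a x => min_le_left _ _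
  -- uniqueness of the index
  have huniq : ∀ (x : X) (a b : A), x ∈ G a → x ∈ G b → a = b := by
    intro x a b ha hb
    obtain ⟨V, hV, hsub⟩ := hdis x
    have hxV : x ∈ V := mem_of_mem_nhds hV
    exact hsub ⟨x, hxV, ha⟩ ⟨x, hxV, hb⟩
  -- the extension map on functions
  set F : CpStar A → X → ℝ := fun y x =>
    if h : ∃ a : A, x ∈ G a then y.1 h.choose * g h.choose x else 0 with hFdef
  have hFval : ∀ (y : CpStar A) (x : X) (a : A), x ∈ G a → F y x = y.1 a * g a x := by
    intro y x a ha
    have h : ∃ b : A, x ∈ G b := ⟨a, ha⟩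
    have hb : h.choose = a := huniq x _ _ h.choose_spec ha
    simp only [hFdef]
    rw [dif_pos h, hb]
  have hFzero : ∀ (y : CpStar A) (x : X), (∀ a : A, x ∉ G a) → F y x = 0 := by
    intro y x hx
    have h : ¬ ∃ a : A, x ∈ G a := by push_neg; exact hx
    simp only [hFdef]
    rw [dif_neg h]
  -- local form of F near each point
  have hlocal : ∀ (y : CpStar A) (x : X),
      ∃ h : X → ℝ, Continuous h ∧ F y =ᶠ[𝓝 x] h := by
    intro y x
    obtain ⟨V, hV, hsub⟩ := hdis x
    by_cases hne : ∃ a : A, (V ∩ G a).Nonempty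
    · obtain ⟨a, ha⟩ := hne
      refine ⟨fun z => y.1 a * g a z, continuous_const.mul (hgc a), ?_⟩
      filter_upwards [hV] with z hz
      by_cases hzb : ∃ b : A, z ∈ G b
      · obtain ⟨b, hb⟩ := hzb
        have hba : b = a := hsub ⟨z, hz, hb⟩ ha
        rw [hFval y z b hb, hba]
      · push_neg at hzb
        rw [hFzero y z hzb, hg0 a z (hzb a), mul_zero]
    · refine ⟨fun _ => 0, continuous_const, ?_⟩
      filter_upwards [hV] with z hz
      have : ∀ b : A, z ∉ G b := fun b hb => hne ⟨b, z, hz, hb⟩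
      exact hFzero y z this
  have hFcont : ∀ y : CpStar A, Continuous (F y) := by
    intro y
    rw [continuous_iff_continuousAt]
    intro x
    obtain ⟨h, hc, heq⟩ := hlocal y x
    exact (hc.continuousAt).congr heq.symm
  have hFbd : ∀ y : CpStar A, ∃ M : ℝ, ∀ x, |F y x| ≤ M := by
    intro y
    obtain ⟨M, hM⟩ := y.2.2
    refine ⟨max M 0, fun x => ?_⟩
    by_cases h : ∃ a : A, x ∈ G a
    · obtain ⟨a, ha⟩ := h
      rw [hFval y x a ha, abs_mul, abs_of_nonneg (hgnn a x)]
      calc |y.1 a| * g a x ≤ M * 1 :=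
            mul_le_mul (hM a) (hgle a x) (hgnn a x) ((abs_nonneg _).trans (hM a))
        _ ≤ max M 0 := by simp
    · push_neg at h
      rw [hFzero y x h]
      simp
  refine ⟨fun y => ⟨F y, hFcont y, hFbd y⟩, ?_, ?_, ?_⟩
  · apply Continuous.subtype_mk
    apply continuous_pi
    intro x
    by_cases h : ∃ a : A, x ∈ G a
    · simp only [hFdef, dif_pos h]
      exact (((continuous_apply h.choose).comp continuous_subtype_val).mul continuous_const)
    · simp only [hFdef, dif_neg h]
      exact continuous_const
  · intro c d y z w hw x
    show F w x = c * F y x + d * F z x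
    by_cases h : ∃ a : A, x ∈ G a
    · obtain ⟨a, ha⟩ := h
      rw [hFval w x a ha, hFval y x a ha, hFval z x a ha, hw a]
      ring
    · push_neg at h
      rw [hFzero w x h, hFzero y x h, hFzero z x h]
      ring
  · intro y a
    show F y a = y.1 a
    rw [hFval y a a (hmem a), hga a, mul_one]
end

section
/- Let X be a topological space and A ⊆ X a countable subset which is discrete in its subspace topology. If A is strongly functionally discrete in X, then there exists a linear continuous mapping φ : C_p(A) → C_p(X) such that φ(y)|_A = y for every y ∈ C_p(A). -/
open Set Topology

/-- If a countable discrete subspace `A` of `X` is strongly functionally discrete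
in `X`, then there is a linear continuous extender `φ : C_p(A) → C_p(X)`. -/
theorem stmt_4 {X : Type*} [TopologicalSpace X] (A : Set X)
    (hcount : A.Countable) (hdisc : DiscreteTopology A)
    (hsfd : StronglyFunctionallyDiscrete A) :
    ∃ φ : Cp A → Cp X, Continuous φ ∧
      (∀ (c d : ℝ) (y z w : Cp A), (∀ a : A, w.1 a = c * y.1 a + d * z.1 a) →
        ∀ x : X, (φ w).1 x = c * (φ y).1 x + d * (φ z).1 x) ∧
      (∀ y : Cp A, ∀ a : A, (φ y).1 a = y.1 a) := by
  classical
  obtain ⟨G, hmemG, hfoG, hdiscG⟩ := hsfd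
  have huniq : ∀ (x : X) (a a' : A), x ∈ G a → x ∈ G a' → a = a' := by
    intro x a a' ha ha'
    obtain ⟨V, hV, hsub⟩ := hdiscG x
    have hxV : x ∈ V := mem_of_mem_nhds hV
    exact hsub ⟨x, hxV, ha⟩ ⟨x, hxV, ha'⟩
  choose f hfc hfG using hfoG
  set g : A → X → ℝ := fun a x => (f a x / f a (a : X)) ^ 2 with hg
  have hgc : ∀ a, Continuous (g a) := fun a => ((hfc a).div_const _).pow 2
  have hga : ∀ a : A, g a (a : X) = 1 := by
    intro a
    have hne : f a (a : X) ≠ 0 := by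
      have := hmemG a
      rw [hfG a] at this
      simpa using this
    simp [hg, div_self hne]
  have hg0 : ∀ (a : A) (x : X), x ∉ G a → g a x = 0 := by
    intro a x hx
    rw [hfG a] at hx
    simp only [Set.mem_preimage, Set.mem_compl_iff, Set.mem_singleton_iff, not_not] at hx
    simp [hg, hx]
  set s : Cp A → X → ℝ := fun y x =>
    if h : ∃ a : A, x ∈ G a then y.1 h.choose * g h.choose x else 0 with hs
  have hsval : ∀ (y : Cp A) (x : X) (a : A), x ∈ G a → s y x = y.1 a * g a x := by
    intro y x a hx
    have hex : ∃ a : A, x ∈ G a := ⟨a, hx⟩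
    have hc : hex.choose = a := huniq x _ _ hex.choose_spec hx
    show (if h : ∃ a : A, x ∈ G a then y.1 h.choose * g h.choose x else 0) = _
    rw [dif_pos hex, hc]
  have hsval0 : ∀ (y : Cp A) (x : X), (¬ ∃ a : A, x ∈ G a) → s y x = 0 := by
    intro y x hx
    show (if h : ∃ a : A, x ∈ G a then y.1 h.choose * g h.choose x else 0) = 0
    rw [dif_neg hx]
  have hscont : ∀ y, Continuous (s y) := by
    intro y
    rw [continuous_iff_continuousAt]
    intro x
    obtain ⟨V, hV, hsub⟩ := hdiscG x
    by_cases hA : ∃ a : A, (V ∩ G a).Nonempty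
    · obtain ⟨a₀, ha₀⟩ := hA
      have heq : ∀ x' ∈ V, s y x' = y.1 a₀ * g a₀ x' := by
        intro x' hx'
        by_cases hx'' : ∃ a : A, x' ∈ G a
        · obtain ⟨a, ha⟩ := hx''
          have hc : a = a₀ := hsub ⟨x', hx', ha⟩ ha₀
          rw [hsval y x' a ha, hc]
        · rw [hsval0 y x' hx'']
          have hng : x' ∉ G a₀ := fun h => hx'' ⟨a₀, h⟩
          rw [hg0 a₀ x' hng, mul_zero]
      have hca : ContinuousAt (fun x' => y.1 a₀ * g a₀ x') x :=
        (continuous_const.mul (hgc a₀)).continuousAt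
      exact hca.congr
        (Filter.eventuallyEq_of_mem hV fun x' hx' => (heq x' hx').symm)
    · have heq : ∀ x' ∈ V, s y x' = 0 := by
        intro x' hx'
        apply hsval0
        rintro ⟨a, ha⟩
        exact hA ⟨a, x', hx', ha⟩
      have hca : ContinuousAt (fun _ : X => (0 : ℝ)) x := continuousAt_const
      exact hca.congr
        (Filter.eventuallyEq_of_mem hV fun x' hx' => (heq x' hx').symm)
  refine ⟨fun y => ⟨s y, hscont y⟩, ?_, ?_, ?_⟩
  · apply continuous_induced_rng.2
    apply continuous_pi
    intro x
    show Continuous fun y : Cp A => s y x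
    by_cases hx : ∃ a : A, x ∈ G a
    · have heq : (fun y : Cp A => s y x) = fun y : Cp A => y.1 hx.choose * g hx.choose x :=
        funext fun y => hsval y x hx.choose hx.choose_spec
      rw [heq]
      exact ((continuous_apply _).comp continuous_subtype_val).mul continuous_const
    · have heq : (fun y : Cp A => s y x) = fun _ => 0 :=
        funext fun y => hsval0 y x hx
      rw [heq]
      exact continuous_const
  · intro c d y z w hw x
    by_cases hx : ∃ a : A, x ∈ G a
    · obtain ⟨a, ha⟩ := hx
      simp only [hsval _ x a ha, hw a]
      ring
    · simp [hsval0 _ x hx]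
  · intro y a
    show s y (a : X) = y.1 a
    rw [hsval y (a : X) a (hmemG a), hga a, mul_one]
end

section
/- Let X be a topological space and A ⊆ X a countable subset which is discrete in its subspace topology. Then there exists a continuous mapping φ : C_p*(A) → C_p(X) with φ(y)|_A = y for every y ∈ C_p*(A) if and only if A is strongly functionally discrete in X. -/
open Set Topology

/-- A functionally open set is open. -/
lemma funOpen_isOpen' {X : Type*} [TopologicalSpace X] {U : Set X} (h : FunctionallyOpen U) :
    IsOpen U := by
  obtain ⟨f, hf, rfl⟩ := h
  exact IsOpen.preimage hf isOpen_compl_singleton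

/-- A finite intersection of "strips" `{x | |g k x - c k| < ε}` is functionally open. -/
lemma funOpen_strips' {X : Type*} [TopologicalSpace X] {ι : Type*} (s : Finset ι)
    (g : ι → X → ℝ) (c : ι → ℝ) (ε : ℝ) (hg : ∀ k, Continuous (g k)) :
    FunctionallyOpen {x | ∀ k ∈ s, |g k x - c k| < ε} := by
  refine ⟨fun x => ∏ k ∈ s, max 0 (ε - |g k x - c k|), ?_, ?_⟩
  · exact continuous_finset_prod _ fun k _ =>
      continuous_const.max (continuous_const.sub (((hg k).sub continuous_const).abs))
  · ext x
    simp only [Set.mem_setOf_eq, Set.mem_preimage, Set.mem_compl_iff, Set.mem_singleton_iff,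
      Finset.prod_ne_zero_iff]
    constructor
    · intro H k hk
      have h1 : 0 < ε - |g k x - c k| := by have := H k hk; linarith
      exact (lt_max_of_lt_right h1).ne'
    · intro H k hk
      by_contra hcon
      push_neg at hcon
      exact H k hk (max_eq_left (by linarith))

/-- The intersection of two functionally open sets is functionally open. -/
lemma funOpen_inter' {X : Type*} [TopologicalSpace X] {U W : Set X}
    (hU : FunctionallyOpen U) (hW : FunctionallyOpen W) : FunctionallyOpen (U ∩ W) := by
  obtain ⟨f, hf, rfl⟩ := hU
  obtain ⟨g, hg, rfl⟩ := hW
  refine ⟨fun x => f x * g x, hf.mul hg, ?_⟩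
  ext x
  simp [mul_ne_zero_iff]

/-- Hard direction: a continuous extender yields strong functional discreteness. -/
lemma stmt_5_forward {X : Type*} [TopologicalSpace X] (A : Set X)
    (hcount : A.Countable) (hdisc : DiscreteTopology A)
    (φ : CpStar A → Cp X) (hφc : Continuous φ)
    (hφe : ∀ y : CpStar A, ∀ a : A, (φ y).1 a = y.1 a) :
    StronglyFunctionallyDiscrete A := by
  classical
  obtain ⟨f, hf⟩ : ∃ f : A → ℕ, Function.Injective f :=
    Set.countable_iff_exists_injective.mp hcount
  -- indicator functions of subsets of `A`, as elements of `C_p*(A)`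
  let yT : Set A → CpStar A := fun T =>
    ⟨fun b => if b ∈ T then 1 else 0, continuous_of_discreteTopology,
      1, fun b => by dsimp only; split_ifs <;> norm_num⟩
  -- their images under the extender
  let h : Set A → X → ℝ := fun T => (φ (yT T)).1
  have hco : ∀ T, Continuous (h T) := fun T => (φ (yT T)).2
  have hval : ∀ (T : Set A) (b : A), h T (b : X) = if b ∈ T then 1 else 0 :=
    fun T b => hφe (yT T) b
  let tailS : ℕ → Set A := fun j => {b : A | j < f b}
  have hfinLE : ∀ n : ℕ, {b : A | f b ≤ n}.Finite := by
    intro n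
    have : {b : A | f b ≤ n} = f ⁻¹' (Set.Iic n) := rfl
    rw [this]
    exact Set.Finite.preimage hf.injOn (Set.finite_Iic n)
  -- the functionally open sets: finitely many test conditions per point
  let G : A → Set X := fun a =>
    {x | ∀ T ∈ ({(∅ : Set A)} : Finset (Set A)), |h T x - (if a ∈ T then 1 else 0)| < 1/4} ∩
    ({x | ∀ j ∈ Finset.range (f a + 1),
        |h (tailS j) x - (if a ∈ tailS j then 1 else 0)| < 1/4} ∩
     {x | ∀ b ∈ (hfinLE (f a)).toFinset,
        |h {b} x - (if a ∈ ({b} : Set A) then 1 else 0)| < 1/4})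
  refine ⟨G, ?_, ?_, ?_⟩
  · -- each `a` belongs to `G a`
    intro a
    refine ⟨?_, ?_, ?_⟩ <;> intro T hT <;> rw [hval] <;> split_ifs <;> norm_num
  · -- each `G a` is functionally open
    intro a
    exact funOpen_inter' (funOpen_strips' _ _ _ _ hco)
      (funOpen_inter' (funOpen_strips' _ (fun j => h (tailS j)) _ _ (fun j => hco _))
        (funOpen_strips' _ (fun b => h {b}) _ _ (fun b => hco _)))
  · -- discreteness
    intro x
    -- continuity of evaluation at x, at the zero indicator
    have hevc : Continuous (fun y : CpStar A => (φ y).1 x) :=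
      ((continuous_apply x).comp continuous_subtype_val).comp hφc
    obtain ⟨E, hEfin, hE⟩ : ∃ E : Set A, E.Finite ∧ ∀ y : CpStar A,
        (∀ b ∈ E, y.1 b = 0) → |(φ y).1 x - (φ (yT ∅)).1 x| < 1/8 := by
      have h1 : {r : ℝ | |r - (φ (yT ∅)).1 x| < 1/8} ∈ 𝓝 ((φ (yT ∅)).1 x) := by
        have : {r : ℝ | |r - (φ (yT ∅)).1 x| < 1/8} = Metric.ball ((φ (yT ∅)).1 x) (1/8) := by
          ext r; simp [Metric.mem_ball, Real.dist_eq]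
        rw [this]
        exact Metric.ball_mem_nhds _ (by norm_num)
      have h2 := (hevc.continuousAt (x := yT ∅)).preimage_mem_nhds h1
      rw [nhds_subtype_eq_comap, Filter.mem_comap] at h2
      obtain ⟨u, hu, hsubu⟩ := h2
      rw [nhds_pi, Filter.mem_pi] at hu
      obtain ⟨I, hIfin, t, ht, hIt⟩ := hu
      refine ⟨I, hIfin, ?_⟩
      intro y hy
      have hyu : (y : A → ℝ) ∈ u := by
        apply hIt
        intro b hb
        have := ht b
        rw [if_neg (Set.notMem_empty b)] at this
        have h2 := mem_of_mem_nhds this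
        rw [hy b hb]
        exact h2
      exact hsubu hyu
    set j₁ := hEfin.toFinset.sup f with hj₁
    have hEle : ∀ b ∈ E, f b ≤ j₁ := fun b hb =>
      Finset.le_sup (hEfin.mem_toFinset.mpr hb)
    let Tfin : Finset (Set A) :=
      insert ∅ (insert (tailS j₁) ((hfinLE j₁).toFinset.image fun b => ({b} : Set A)))
    let V : Set X := {x' | ∀ T ∈ Tfin, |h T x' - h T x| < 1/8}
    have hVopen : IsOpen V := funOpen_isOpen' (funOpen_strips' Tfin h (fun T => h T x) _ hco)
    have hxV : x ∈ V := by
      intro T hT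
      simp
    refine ⟨V, hVopen.mem_nhds hxV, ?_⟩
    have key : ∀ c d : A, f c < f d → (V ∩ G c).Nonempty → (V ∩ G d).Nonempty → False := by
      rintro c d hcd ⟨u, huV, huG⟩ ⟨v, hvV, hvG⟩
      have hne : d ∉ ({c} : Set A) := by
        simp only [Set.mem_singleton_iff]
        intro hdc
        exact absurd (hdc ▸ hcd) (lt_irrefl _)
      by_cases hcle : f c ≤ j₁
      · -- both points are controlled by the singleton test at `c`
        have hcmemc : c ∈ (hfinLE (f c)).toFinset := (hfinLE (f c)).mem_toFinset.mpr (by simp)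
        have hcmemd : c ∈ (hfinLE (f d)).toFinset :=
          (hfinLE (f d)).mem_toFinset.mpr (by simpa using hcd.le)
        have hs1 := huG.2.2 c hcmemc
        have hs2 := hvG.2.2 c hcmemd
        rw [if_pos (Set.mem_singleton c)] at hs1
        rw [if_neg hne] at hs2
        have hTm : ({c} : Set A) ∈ Tfin := by
          refine Finset.mem_insert_of_mem (Finset.mem_insert_of_mem ?_)
          exact Finset.mem_image.mpr ⟨c, (hfinLE j₁).mem_toFinset.mpr (by simpa using hcle), rfl⟩
        have hV1 := huV ({c} : Set A) hTm
        have hV2 := hvV ({c} : Set A) hTm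
        rw [abs_lt] at hs1 hs2 hV1 hV2
        linarith
      · -- both indices are beyond j₁: use the empty test and the tail test at j₁
        push_neg at hcle
        have hj1d : j₁ < f d := hcle.trans hcd
        have he0 := huG.1 ∅ (Finset.mem_singleton_self _)
        rw [if_neg (Set.notMem_empty c)] at he0
        have hV0 := huV ∅ (Finset.mem_insert_self _ _)
        have ht1 := hvG.2.1 j₁ (Finset.mem_range.mpr (Nat.lt_succ_of_le hj1d.le))
        rw [if_pos (show d ∈ tailS j₁ from hj1d)] at ht1
        have hTt : tailS j₁ ∈ Tfin :=
          Finset.mem_insert_of_mem (Finset.mem_insert_self _ _)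
        have hVt := hvV (tailS j₁) hTt
        have hmid : |h (tailS j₁) x - h ∅ x| < 1/8 := by
          have := hE (yT (tailS j₁)) ?_
          · exact this
          · intro b hb
            have : ¬ (j₁ < f b) := not_lt.mpr (hEle b hb)
            simp [yT, tailS, this]
        rw [abs_lt] at he0 hV0 ht1 hVt hmid
        linarith
    intro a ha a' ha'
    by_contra hne
    rcases (hf.ne hne).lt_or_gt with hlt | hlt
    · exact key a a' hlt ha ha'
    · exact key a' a hlt ha' ha

/-- Easy direction: strong functional discreteness yields a continuous extender. -/
lemma stmt_5_backward {X : Type*} [TopologicalSpace X] (A : Set X)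
    (h : StronglyFunctionallyDiscrete A) :
    (∃ φ : CpStar A → Cp X, Continuous φ ∧
      ∀ y : CpStar A, ∀ a : A, (φ y).1 a = y.1 a) := by
  classical
  obtain ⟨G, hmem, hfo, hdc⟩ := h
  choose F hFc hFG using hfo
  have huniq : ∀ (x : X) (a b : A), x ∈ G a → x ∈ G b → a = b := by
    intro x a b hxa hxb
    obtain ⟨V, hV, hsub⟩ := hdc x
    exact hsub ⟨x, mem_of_mem_nhds hV, hxa⟩ ⟨x, mem_of_mem_nhds hV, hxb⟩
  have hFne : ∀ a : A, F a (a : X) ≠ 0 := by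
    intro a
    have := hmem a
    rw [hFG a] at this
    simpa using this
  have hFzero : ∀ (a : A) (x : X), x ∉ G a → F a x = 0 := by
    intro a x hx
    rw [hFG a] at hx
    simpa using hx
  set Φ : CpStar A → X → ℝ := fun y x =>
    if hx : ∃ a : A, x ∈ G a then y.1 hx.choose * (F hx.choose x / F hx.choose (hx.choose : X))
    else 0 with hΦ
  have hΦG : ∀ (y : CpStar A) (x : X) (a : A), x ∈ G a →
      Φ y x = y.1 a * (F a x / F a (a : X)) := by
    intro y x a hxa
    have hx : ∃ b : A, x ∈ G b := ⟨a, hxa⟩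
    have hch : hx.choose = a := huniq x _ a hx.choose_spec hxa
    simp only [hΦ, dif_pos hx, hch]
  have hΦ0 : ∀ (y : CpStar A) (x : X), (∀ a : A, x ∉ G a) → Φ y x = 0 := by
    intro y x hx
    have : ¬ ∃ a : A, x ∈ G a := by push_neg; exact hx
    simp only [hΦ, dif_neg this]
  have hΦcont : ∀ y : CpStar A, Continuous (Φ y) := by
    intro y
    rw [continuous_iff_continuousAt]
    intro x
    obtain ⟨V, hV, hsub⟩ := hdc x
    by_cases hex : ∃ a : A, (V ∩ G a).Nonempty
    · obtain ⟨a₀, ha₀⟩ := hex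
      have hWx : interior V ∈ 𝓝 x := interior_mem_nhds.mpr hV
      have heq : ∀ x' ∈ interior V, Φ y x' = y.1 a₀ * (F a₀ x' / F a₀ (a₀ : X)) := by
        intro x' hx'
        by_cases hx'G : ∃ a : A, x' ∈ G a
        · obtain ⟨a, ha⟩ := hx'G
          have : a = a₀ := hsub ⟨x', interior_subset hx', ha⟩ ha₀
          rw [hΦG y x' a ha, this]
        · push_neg at hx'G
          rw [hΦ0 y x' hx'G, hFzero a₀ x' (hx'G a₀), zero_div, mul_zero]
      have hcg : ContinuousAt (fun x' => y.1 a₀ * (F a₀ x' / F a₀ (a₀ : X))) x :=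
        (continuous_const.mul ((hFc a₀).div_const _)).continuousAt
      exact hcg.congr (Filter.eventuallyEq_of_mem hWx fun x' hx' => (heq x' hx').symm)
    · have hWx : interior V ∈ 𝓝 x := interior_mem_nhds.mpr hV
      have heq : ∀ x' ∈ interior V, Φ y x' = 0 := by
        intro x' hx'
        exact hΦ0 y x' fun a hxa => hex ⟨a, ⟨x', interior_subset hx', hxa⟩⟩
      exact continuousAt_const.congr
        (Filter.eventuallyEq_of_mem hWx fun x' hx' => (heq x' hx').symm)
  refine ⟨fun y => ⟨Φ y, hΦcont y⟩, ?_, ?_⟩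
  · apply Continuous.subtype_mk
    apply continuous_pi
    intro x
    by_cases hx : ∃ a : A, x ∈ G a
    · simp only [hΦ, dif_pos hx]
      exact ((continuous_apply _).comp continuous_subtype_val).mul continuous_const
    · simp only [hΦ, dif_neg hx]
      exact continuous_const
  · intro y a
    have := hΦG y (a : X) a (hmem a)
    simp only [this, div_self (hFne a), mul_one]

/-- For a countable discrete subspace `A` of `X`: a continuous extender
`φ : C_p*(A) → C_p(X)` exists iff `A` is strongly functionally discrete in `X`. -/
theorem stmt_5 {X : Type*} [TopologicalSpace X] (A : Set X)
    (hcount : A.Countable) (hdisc : DiscreteTopology A) :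
    (∃ φ : CpStar A → Cp X, Continuous φ ∧
      ∀ y : CpStar A, ∀ a : A, (φ y).1 a = y.1 a) ↔
    StronglyFunctionallyDiscrete A := by
  constructor
  · rintro ⟨φ, hφc, hφe⟩
    exact stmt_5_forward A hcount hdisc φ hφc hφe
  · exact stmt_5_backward A
end

section
/- Let X be a completely regular (Tychonoff) P-space, i.e., every point x ∈ X satisfies x ∉ closure(A) for every F_σ-set A ⊆ X \ {x}. Then every countable subset A of X is strongly functionally discrete in X, and consequently there exists a linear continuous mapping φ : C_p*(A) → C_p(X) with φ(y)|_A = y for every y ∈ C_p*(A). -/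
open Set Topology

/-!
In a `P`-space countable unions of closed sets are closed, so countable sets are closed
and cozero sets are clopen. Complete regularity then gives, for each `a ∈ A`,
a clopen `U a` with `U a ∩ A = {a}`. Enumerating `A` as `e 0, e 1, …` and sending `x` to
`e n` for the least `n` with `x ∈ U (e n)` yields a locally constant retraction `r : X → A`.
Its fibres form the discrete family of clopen (hence cozero) sets, and `y ↦ y ∘ r` is the
linear continuous extender.
-/

def IsPSpace (X : Type*) [TopologicalSpace X] : Prop :=
  ∀ (x : X) (F : ℕ → Set X), (∀ n, IsClosed (F n)) →
    x ∉ (⋃ n, F n) → x ∉ closure (⋃ n, F n)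

namespace IsPSpace

variable {X : Type*} [TopologicalSpace X] (hP : IsPSpace X)
include hP

theorem isClosed_iUnion {ι : Type*} [Countable ι] {F : ι → Set X} (hF : ∀ i, IsClosed (F i)) :
    IsClosed (⋃ i, F i) := by
  rcases isEmpty_or_nonempty ι with _ | _
  · simp only [iUnion_of_empty, isClosed_empty]
  obtain ⟨e, he⟩ := exists_surjective_nat ι
  rw [← he.iUnion_comp]
  exact isClosed_of_closure_subset fun x hx => by
    by_contra hxF
    exact hP x (F ∘ e) (fun n => hF (e n)) hxF hx

theorem isClosed_of_countable [T1Space X] {A : Set X} (hA : A.Countable) : IsClosed A := by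
  have := hA.to_subtype
  rw [← iUnion_of_singleton_coe A]
  exact hP.isClosed_iUnion fun _ => isClosed_singleton

theorem isClosed_preimage {Y : Type*} [PseudoEMetricSpace Y] {f : X → Y} (hf : Continuous f)
    {U : Set Y} (hU : IsOpen U) : IsClosed (f ⁻¹' U) := by
  obtain ⟨F, hF, -, rfl, -⟩ := hU.exists_iUnion_isClosed
  rw [preimage_iUnion]
  exact hP.isClosed_iUnion fun n => (hF n).preimage hf

theorem exists_isClopen_mem_disjoint [CompletelyRegularSpace X] {C : Set X} (hC : IsClosed C)
    {x : X} (hx : x ∉ C) : ∃ U, IsClopen U ∧ x ∈ U ∧ Disjoint U C := by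
  obtain ⟨f, hf, hfx, hfC⟩ := CompletelyRegularSpace.completely_regular x C hC hx
  refine ⟨f ⁻¹' {1}ᶜ, ⟨hP.isClosed_preimage hf isOpen_compl_singleton,
    isOpen_compl_singleton.preimage hf⟩, ?_, ?_⟩
  · simp [hfx]
  · exact disjoint_left.2 fun y hy hyC => hy (hfC hyC)

/-- Outside `⋃ n, W n` the value is `sInf ∅ = 0`, which is what makes the function locally
constant there as well. -/
theorem isLocallyConstant_sInf_mem {W : ℕ → Set X} (hW : ∀ n, IsClopen (W n)) :
    IsLocallyConstant fun x => sInf {n | x ∈ W n} := by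
  rw [IsLocallyConstant.iff_exists_open]
  intro x
  by_cases hx : ∃ n, x ∈ W n
  · set n := sInf {n | x ∈ W n}
    have hfirst : IsClosed (⋃ k < n, W k) :=
      (finite_lt_nat n).isClosed_biUnion fun k _ => (hW k).isClosed
    refine ⟨W n \ ⋃ k < n, W k, (hW n).isOpen.sdiff hfirst,
      ⟨Nat.sInf_mem hx, ?_⟩, fun y hy => ?_⟩
    · simp only [mem_iUnion, not_exists]
      exact fun k hk => Nat.notMem_of_lt_sInf hk
    · refine le_antisymm (Nat.sInf_le hy.1) (le_csInf ⟨n, hy.1⟩ fun k hk => ?_)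
      exact not_lt.1 fun hkn => hy.2 (mem_biUnion hkn hk)
  · have hclosed : IsClosed (⋃ n, W n) := hP.isClosed_iUnion fun n => (hW n).isClosed
    refine ⟨(⋃ n, W n)ᶜ, hclosed.isOpen_compl, by simpa using hx, fun y hy => ?_⟩
    push Not at hx
    simp only [mem_compl_iff, mem_iUnion, not_exists] at hy
    simp [hx, hy]

theorem exists_isLocallyConstant_retraction [T35Space X] {A : Set X} (hA : A.Countable)
    (hne : A.Nonempty) : ∃ r : X → A, IsLocallyConstant r ∧ ∀ a : A, r a = a := by
  have hU : ∀ a : A, ∃ U, IsClopen U ∧ ∀ b : A, (b : X) ∈ U ↔ b = a := by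
    intro a
    obtain ⟨U, hU, haU, hUA⟩ := hP.exists_isClopen_mem_disjoint
      (hP.isClosed_of_countable (hA.mono sdiff_subset)) (fun h => h.2 rfl : (a : X) ∉ A \ {a.1})
    refine ⟨U, hU, fun b => ⟨fun hb => ?_, fun hb => hb ▸ haU⟩⟩
    by_contra hba
    exact disjoint_left.1 hUA hb ⟨b.2, fun h => hba (Subtype.ext h)⟩
  choose U hUclopen hUA using hU
  have := hA.to_subtype
  have := hne.to_subtype
  obtain ⟨e, he⟩ := exists_surjective_nat A
  refine ⟨fun x => e (sInf {n | x ∈ U (e n)}),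
    (hP.isLocallyConstant_sInf_mem fun n => hUclopen (e n)).comp e, fun a => ?_⟩
  simp only [hUA, @eq_comm _ a]
  exact Nat.sInf_mem (he a)

end IsPSpace

theorem IsClopen.functionallyOpen {X : Type*} [TopologicalSpace X] {U : Set X}
    (hU : IsClopen U) : FunctionallyOpen U :=
  ⟨U.indicator 1, hU.continuous_indicator continuous_const, by ext; simp⟩

section Retraction

variable {X : Type*} [TopologicalSpace X] {A : Set X} {r : X → A}

theorem stronglyFunctionallyDiscrete_of_retraction (hr : IsLocallyConstant r)
    (hrA : ∀ a : A, r a = a) : StronglyFunctionallyDiscrete A := by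
  refine ⟨fun a => r ⁻¹' {a}, hrA, fun a => (hr.isClopen_fiber a).functionallyOpen,
    fun x => ⟨r ⁻¹' {r x}, (hr.isOpen_fiber _).mem_nhds rfl, ?_⟩⟩
  rintro a ⟨y, hyx, hya⟩ b ⟨z, hzx, hzb⟩
  exact (hya.symm.trans hyx).trans (hzx.symm.trans hzb)

theorem exists_linear_extender_of_retraction (hr : Continuous r) (hrA : ∀ a : A, r a = a) :
    ∃ φ : CpStar A → Cp X, Continuous φ ∧
      (∀ (c d : ℝ) (y z w : CpStar A), (∀ a : A, w.1 a = c * y.1 a + d * z.1 a) →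
        ∀ x : X, (φ w).1 x = c * (φ y).1 x + d * (φ z).1 x) ∧
      (∀ y : CpStar A, ∀ a : A, (φ y).1 a = y.1 a) :=
  ⟨fun y => ⟨y.1 ∘ r, y.2.1.comp hr⟩,
    continuous_induced_rng.2 <| continuous_pi fun x =>
      (continuous_apply (r x)).comp continuous_subtype_val,
    fun _ _ _ _ _ hw x => hw (r x), fun y a => congrArg y.1 (hrA a)⟩

end Retraction

/-- If `X` is a completely regular (Tychonoff) `P`-space, then every countable
`A ⊆ X` is strongly functionally discrete in `X`, and consequently there is a linear
continuous extender `φ : C_p*(A) → C_p(X)`. -/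
theorem stmt_12 {X : Type*} [TopologicalSpace X] [T35Space X]
    (hP : ∀ (x : X) (F : ℕ → Set X), (∀ n, IsClosed (F n)) →
      x ∉ (⋃ n, F n) → x ∉ closure (⋃ n, F n)) :
    ∀ A : Set X, A.Countable →
      StronglyFunctionallyDiscrete A ∧
      ∃ φ : CpStar A → Cp X, Continuous φ ∧
        (∀ (c d : ℝ) (y z w : CpStar A), (∀ a : A, w.1 a = c * y.1 a + d * z.1 a) →
          ∀ x : X, (φ w).1 x = c * (φ y).1 x + d * (φ z).1 x) ∧
        (∀ y : CpStar A, ∀ a : A, (φ y).1 a = y.1 a) := by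
  intro A hA
  rcases A.eq_empty_or_nonempty with rfl | hne
  · exact ⟨⟨isEmptyElim, isEmptyElim, isEmptyElim,
        fun _ => ⟨univ, Filter.univ_mem, fun a => isEmptyElim a⟩⟩,
      fun _ => ⟨0, continuous_const⟩, continuous_const, fun _ _ _ _ _ _ _ => by simp,
      fun _ a => isEmptyElim a⟩
  obtain ⟨r, hr, hrA⟩ := IsPSpace.exists_isLocallyConstant_retraction hP hA hne
  exact ⟨stronglyFunctionallyDiscrete_of_retraction hr hrA,
    exists_linear_extender_of_retraction hr.continuous hrA⟩
end

section
/- Let X be a topological space, A ⊆ X, F ⊆ X a functionally closed set and G ⊆ X a functionally open set such that A ⊆ F ⊆ G and A is a retract of G (there exists a continuous mapping r : G → A with r(a) = a for all a ∈ A). Then there exists a linear continuous mapping φ : C_p*(A) → C_p*(X) such that φ(y)|_A = y for every y ∈ C_p*(A). -/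
/-! An extender is `φ y = h · (y ∘ r)` on `G`, extended by `0`, where `h : X → [0, 1]` is a
Urysohn function equal to `1` on `F` and `0` off `G`, built from the functions defining `F`
and `G` as `|v| / (|u| + |v|)`. Linearity and pointwise continuity are clear, since each
value `φ y x` depends on the single value `y (r x)`; continuity of `φ y` at a point where
`h` vanishes holds because `y` is bounded. -/

open Set Topology

open Filter

section

variable {X : Type*} [TopologicalSpace X]

theorem exists_continuous_one_zero_of_functionallyOpen {F G : Set X} (hFG : F ⊆ G)
    (hF : FunctionallyOpen Fᶜ) (hG : FunctionallyOpen G) :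
    ∃ h : X → ℝ, Continuous h ∧ (∀ x, |h x| ≤ 1) ∧ EqOn h 1 F ∧ ∀ x ∉ G, h x = 0 := by
  obtain ⟨u, hu, hFu⟩ := hF
  obtain ⟨v, hv, hGv⟩ := hG
  have mem_compl_F : ∀ x, x ∈ Fᶜ ↔ u x ≠ 0 := fun x => by rw [hFu]; rfl
  have mem_G : ∀ x, x ∈ G ↔ v x ≠ 0 := fun x => by rw [hGv]; rfl
  have hden : ∀ x, 0 < |u x| + |v x| := by
    intro x
    by_cases hvx : v x = 0
    · have hxF : x ∈ Fᶜ := fun hxF => (mem_G x).1 (hFG hxF) hvx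
      have := abs_pos.2 ((mem_compl_F x).1 hxF)
      positivity
    · have := abs_pos.2 hvx
      positivity
  refine ⟨fun x => |v x| / (|u x| + |v x|),
    hv.abs.div (hu.abs.add hv.abs) fun x => (hden x).ne', fun x => ?_, fun x hx => ?_,
    fun x hx => ?_⟩
  · rw [abs_div, abs_of_pos (hden x), abs_abs, div_le_one (hden x)]
    linarith [abs_nonneg (u x)]
  · have hux : u x = 0 := not_not.1 fun hux => (mem_compl_F x).2 hux hx
    have hvx : v x ≠ 0 := (mem_G x).1 (hFG hx)
    simp [hux, hvx]
  · have hvx : v x = 0 := not_not.1 fun hvx => hx ((mem_G x).2 hvx)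
    simp [hvx]

/-- Near a point where `h ≠ 0` the function lives in the open set `{h ≠ 0} ⊆ G`; where
`h = 0` it is squeezed by `M |h|`. -/
theorem continuous_mul_dite_of_eq_zero {G : Set X} [DecidablePred (· ∈ G)] {h : X → ℝ}
    (hh : Continuous h) (hhG : ∀ x ∉ G, h x = 0) {f : G → ℝ} (hf : Continuous f) {M : ℝ}
    (hfM : ∀ p, |f p| ≤ M) :
    Continuous fun x => if hx : x ∈ G then h x * f ⟨x, hx⟩ else 0 := by
  set g : X → ℝ := fun x => if hx : x ∈ G then h x * f ⟨x, hx⟩ else 0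
  have hg_le : ∀ x, ‖g x‖ ≤ M * |h x| := fun x => by
    by_cases hx : x ∈ G
    · simpa [g, hx, abs_mul, mul_comm] using
        mul_le_mul_of_nonneg_left (hfM ⟨x, hx⟩) (abs_nonneg (h x))
    · simp [g, hx, hhG x hx]
  refine continuous_iff_continuousAt.2 fun x => ?_
  by_cases hx : h x = 0
  · have hMh : Tendsto (fun z => M * |h z|) (𝓝 x) (𝓝 0) :=
      (continuous_const.mul hh.abs).tendsto' x 0 (by simp [hx])
    have hgx : g x = 0 := by simp [g, hx]
    simpa only [ContinuousAt, hgx] using squeeze_zero_norm hg_le hMh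
  · have hUG : {z | h z ≠ 0} ⊆ G := fun z hz => not_imp_comm.1 (hhG z) hz
    have hgU : ContinuousOn g {z | h z ≠ 0} := by
      rw [continuousOn_iff_continuous_domRestrict]
      convert (hh.comp continuous_subtype_val).mul (hf.comp (continuous_inclusion hUG)) using 1
      funext p
      simp [g, hUG p.2]
    exact hgU.continuousAt ((isOpen_ne_fun hh continuous_const).mem_nhds hx)

end

open Classical in
noncomputable def retractExtension {X : Type*} {A G : Set X} (h : X → ℝ) (r : G → A) :
    (A → ℝ) →L[ℝ] (X → ℝ) :=
  .pi fun x => if hx : x ∈ G then h x • .proj (r ⟨x, hx⟩) else 0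

section

variable {X : Type*} {A G : Set X} {h : X → ℝ} {r : G → A}

open Classical in
theorem retractExtension_apply (y : A → ℝ) (x : X) :
    retractExtension h r y x = if hx : x ∈ G then h x * y (r ⟨x, hx⟩) else 0 := by
  by_cases hx : x ∈ G <;> simp [retractExtension, hx]

theorem retractExtension_apply_of_retract (hA : EqOn h 1 A) (hAG : A ⊆ G)
    (hr : ∀ a : A, r ⟨a, hAG a.2⟩ = a) (y : A → ℝ) (a : A) :
    retractExtension h r y a = y a := by
  simp [retractExtension_apply, hAG a.2, hA a.2, hr]

theorem abs_retractExtension_apply_le (hh : ∀ x, |h x| ≤ 1) {y : A → ℝ} {M : ℝ} (hM : 0 ≤ M)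
    (hyM : ∀ a, |y a| ≤ M) (x : X) : |retractExtension h r y x| ≤ M := by
  rw [retractExtension_apply]
  split_ifs with hx
  · rw [abs_mul]
    exact (mul_le_of_le_one_left (abs_nonneg _) (hh x)).trans (hyM _)
  · simpa using hM

variable [TopologicalSpace X]

theorem continuous_retractExtension_apply (hh : Continuous h) (hhG : ∀ x ∉ G, h x = 0)
    (hr : Continuous r) {y : A → ℝ} (hy : Continuous y) {M : ℝ} (hyM : ∀ a, |y a| ≤ M) :
    Continuous (retractExtension h r y) := by
  classical
  rw [show retractExtension h r y = _ from funext (retractExtension_apply y)]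
  exact continuous_mul_dite_of_eq_zero hh hhG (hy.comp hr) fun p => hyM (r p)

end

/-- If `A ⊆ F ⊆ G` with `F` functionally closed, `G` functionally open and `A` a retract
of `G`, then there is a linear continuous extender `φ : C_p*(A) → C_p*(X)`. -/
theorem stmt_13 {X : Type*} [TopologicalSpace X] (A F G : Set X)
    (hAF : A ⊆ F) (hFG : F ⊆ G)
    (hF : FunctionallyOpen Fᶜ) (hG : FunctionallyOpen G)
    (r : G → A) (hr : Continuous r)
    (hretr : ∀ (x : X) (hx : x ∈ A), ((r ⟨x, hFG (hAF hx)⟩ : A) : X) = x) :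
    ∃ φ : CpStar A → CpStar X, Continuous φ ∧
      (∀ (c d : ℝ) (y z w : CpStar A), (∀ a : A, w.1 a = c * y.1 a + d * z.1 a) →
        ∀ x : X, (φ w).1 x = c * (φ y).1 x + d * (φ z).1 x) ∧
      (∀ y : CpStar A, ∀ a : A, (φ y).1 a = y.1 a) := by
  obtain ⟨h, hh, hh1, hhF, hhG⟩ := exists_continuous_one_zero_of_functionallyOpen hFG hF hG
  have hE (y : CpStar A) : Continuous (retractExtension h r y.1) ∧
      ∃ M, ∀ x, |retractExtension h r y.1 x| ≤ M := by
    obtain ⟨hy, M, hyM⟩ := y.2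
    refine ⟨continuous_retractExtension_apply hh hhG hr hy hyM, max M 0, ?_⟩
    exact abs_retractExtension_apply_le hh1 (le_max_right M 0) fun a =>
      (hyM a).trans (le_max_left M 0)
  refine ⟨fun y => ⟨retractExtension h r y.1, hE y⟩, ?_, fun c d y z w hw x => ?_, fun y a => ?_⟩
  · exact ((retractExtension h r).continuous.comp continuous_subtype_val).subtype_mk _
  · simp [show w.1 = c • y.1 + d • z.1 from funext hw]
  · exact retractExtension_apply_of_retract (hhF.mono hAF) (hAF.trans hFG)
      (fun a => Subtype.ext (hretr a a.2)) y.1 a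
end

section
/- Let X be a topological space and A ⊆ X. Then there exists a linear continuous mapping φ : C_p(A) → C_p(X) with φ(y)|_A = y for every y ∈ C_p(A) if and only if there exists a continuous mapping ψ : X → L(A) with ψ(a) = π_A(a) for every a ∈ A. -/
open Set Topology

/-- `L(A)`: the linear span of the evaluation functionals `π_A(a) : C_p(A) → ℝ`,
`a ∈ A`, viewed as a set of (continuous) functions on `C_p(A)`; as a subspace of
`C_p(C_p(A))` its topology is that of pointwise convergence on `C_p(A)`. -/
def LSet (A : Type*) [TopologicalSpace A] : Set (Cp A → ℝ) :=
  {F | ∃ (n : ℕ) (x : Fin n → A) (α : Fin n → ℝ),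
    F = fun y : Cp A => ∑ i, α i * y.1 (x i)}

lemma LSet_continuous {A : Type*} [TopologicalSpace A] (F : Cp A → ℝ) (hF : F ∈ LSet A) :
    Continuous F := by
  obtain ⟨n, x, α, rfl⟩ := hF
  exact continuous_finset_sum _ fun i _ =>
    continuous_const.mul ((continuous_apply (x i)).comp continuous_subtype_val)

lemma LSet_linear {A : Type*} [TopologicalSpace A] (F : Cp A → ℝ) (hF : F ∈ LSet A)
    (c d : ℝ) (y z w : Cp A) (hw : ∀ a : A, w.1 a = c * y.1 a + d * z.1 a) :
    F w = c * F y + d * F z := by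
  obtain ⟨n, x, α, rfl⟩ := hF
  simp only
  calc ∑ i, α i * w.1 (x i)
      = ∑ i, (c * (α i * y.1 (x i)) + d * (α i * z.1 (x i))) := by
        refine Finset.sum_congr rfl fun i _ => ?_
        rw [hw]; ring
    _ = c * ∑ i, α i * y.1 (x i) + d * ∑ i, α i * z.1 (x i) := by
        rw [Finset.sum_add_distrib, ← Finset.mul_sum, ← Finset.mul_sum]

lemma mem_LSet_of_linear_continuous {A : Type*} [TopologicalSpace A] (F : Cp A → ℝ)
    (hF : Continuous F)
    (hlin : ∀ (c d : ℝ) (y z w : Cp A), (∀ a : A, w.1 a = c * y.1 a + d * z.1 a) →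
      F w = c * F y + d * F z) : F ∈ LSet A := by
  classical
  set cz : Cp A := ⟨fun _ => 0, continuous_const⟩ with hcz
  have h0 : F cz = 0 := by
    have := hlin 0 0 cz cz cz (fun a => by simp [cz])
    simpa using this
  have hIoo : F ⁻¹' Set.Ioo (-1 : ℝ) 1 ∈ 𝓝 cz := by
    apply hF.continuousAt.preimage_mem_nhds
    rw [h0]
    exact isOpen_Ioo.mem_nhds (by norm_num)
  rw [show cz = (⟨fun _ => 0, continuous_const⟩ : Cp A) from rfl,
    nhds_subtype_eq_comap] at hIoo
  obtain ⟨U, hU, hUsub⟩ := hIoo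
  rw [nhds_pi] at hU
  obtain ⟨I, hIfin, t, ht, htsub⟩ := Filter.mem_pi.1 hU
  -- F vanishes on functions vanishing on I
  have key : ∀ y : Cp A, (∀ a ∈ I, y.1 a = 0) → F y = 0 := by
    intro y hy
    by_contra hne
    have hb : ∀ c : ℝ, |c * F y| < 1 := by
      intro c
      set w : Cp A := ⟨fun a => c * y.1 a, continuous_const.mul y.2⟩ with hwdef
      have hw : F w = c * F y := by
        have := hlin c 0 y y w (fun a => by simp [w])
        simpa using this
      have hmem : w.1 ∈ I.pi t := by
        intro a ha
        have h0a : (0 : ℝ) ∈ t a := mem_of_mem_nhds (ht a)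
        simpa [w, hy a ha] using h0a
      have hU' : w ∈ Subtype.val ⁻¹' U := htsub hmem
      have hIooW : F w ∈ Set.Ioo (-1 : ℝ) 1 := hUsub hU'
      rw [hw] at hIooW
      exact abs_lt.2 ⟨hIooW.1, hIooW.2⟩
    have h1 := hb (1 / F y)
    rw [one_div_mul_cancel hne] at h1
    simp at h1
  set s : Finset A := hIfin.toFinset with hs
  set n := s.card with hn
  set e : Fin n → A := fun i => (s.equivFin.symm i : A) with he
  set E : Cp A → (Fin n → ℝ) := fun y i => y.1 (e i) with hEdef
  have key2 : ∀ y z : Cp A, E y = E z → F y = F z := by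
    intro y z hyz
    set w : Cp A := ⟨fun a => y.1 a - z.1 a, y.2.sub z.2⟩ with hwdef
    have hw := hlin 1 (-1) y z w (fun a => by simp [w]; ring)
    have hz : F w = 0 := by
      apply key
      intro a ha
      have has : a ∈ s := hIfin.mem_toFinset.2 ha
      have h1 := congrFun hyz (s.equivFin ⟨a, has⟩)
      simp only [E, e, Equiv.symm_apply_apply] at h1
      simp [w, h1]
    rw [hz] at hw
    linarith [hw]
  let p : Submodule ℝ (Fin n → ℝ) :=
    { carrier := Set.range E
      zero_mem' := ⟨cz, by funext i; simp [E, cz]⟩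
      add_mem' := by
        rintro v w ⟨y, rfl⟩ ⟨z, rfl⟩
        exact ⟨⟨fun a => y.1 a + z.1 a, y.2.add z.2⟩, by funext i; simp [E]⟩
      smul_mem' := by
        rintro c v ⟨y, rfl⟩
        exact ⟨⟨fun a => c * y.1 a, continuous_const.mul y.2⟩,
          by funext i; simp [E, smul_eq_mul]⟩ }
  have hsur : ∀ v : p, ∃ y : Cp A, E y = v.1 := fun v => v.2
  let g : p → Cp A := fun v => (hsur v).choose
  have hg : ∀ v : p, E (g v) = v.1 := fun v => (hsur v).choose_spec
  have hmemE : ∀ y : Cp A, E y ∈ p := fun y => ⟨y, rfl⟩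
  let L0 : p →ₗ[ℝ] ℝ :=
    { toFun := fun v => F (g v)
      map_add' := by
        intro v w
        set ys : Cp A := ⟨fun a => (g v).1 a + (g w).1 a, (g v).2.add (g w).2⟩ with hys
        have hEs : E (g (v + w)) = E ys := by
          funext i
          have h1 := congrFun (hg (v + w)) i
          have h2 := congrFun (hg v) i
          have h3 := congrFun (hg w) i
          simp only [Submodule.coe_add, Pi.add_apply] at h1
          simp [E, ys] at h1 h2 h3 ⊢
          rw [h1, ← h2, ← h3]
        have h4 := hlin 1 1 (g v) (g w) ys (fun a => by simp [ys])
        show F (g (v + w)) = F (g v) + F (g w)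
        rw [key2 _ _ hEs, h4]
        ring
      map_smul' := by
        intro c v
        set ys : Cp A := ⟨fun a => c * (g v).1 a, continuous_const.mul (g v).2⟩ with hys
        have hEs : E (g (c • v)) = E ys := by
          funext i
          have h1 := congrFun (hg (c • v)) i
          have h2 := congrFun (hg v) i
          simp only [Submodule.coe_smul, Pi.smul_apply, smul_eq_mul] at h1
          simp [E, ys] at h1 h2 ⊢
          rw [h1, ← h2]
        have h4 := hlin c 0 (g v) (g v) ys (fun a => by simp [ys])
        show F (g (c • v)) = c • F (g v)
        rw [key2 _ _ hEs, h4]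
        simp }
  obtain ⟨L, hL⟩ := LinearMap.exists_extend L0
  have hFL : ∀ y : Cp A, F y = L (E y) := by
    intro y
    have h1 : L (E y) = L0 ⟨E y, hmemE y⟩ := by
      rw [← hL]; rfl
    rw [h1]
    exact (key2 _ _ (hg ⟨E y, hmemE y⟩)).symm
  refine ⟨n, e, fun i => L (fun j => if i = j then 1 else 0), ?_⟩
  funext y
  rw [hFL y, LinearMap.pi_apply_eq_sum_univ]
  refine Finset.sum_congr rfl fun i _ => ?_
  simp [E, mul_comm, smul_eq_mul]

/-- There is a linear continuous extender `φ : C_p(A) → C_p(X)` iff there is a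
continuous `ψ : X → L(A)` with `ψ(a) = π_A(a)` for all `a ∈ A`. -/
theorem stmt_14 {X : Type*} [TopologicalSpace X] (A : Set X) :
    (∃ φ : Cp A → Cp X, Continuous φ ∧
      (∀ (c d : ℝ) (y z w : Cp A), (∀ a : A, w.1 a = c * y.1 a + d * z.1 a) →
        ∀ x : X, (φ w).1 x = c * (φ y).1 x + d * (φ z).1 x) ∧
      (∀ y : Cp A, ∀ a : A, (φ y).1 a = y.1 a)) ↔
    (∃ ψ : X → LSet A, Continuous ψ ∧
      ∀ (a : X) (ha : a ∈ A), (ψ a).1 = fun y : Cp A => y.1 ⟨a, ha⟩) := by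
  constructor
  · rintro ⟨φ, hφc, hφlin, hφext⟩
    have hFx : ∀ x : X, (fun y : Cp A => (φ y).1 x) ∈ LSet A := by
      intro x
      apply mem_LSet_of_linear_continuous
      · exact (continuous_apply x).comp (continuous_subtype_val.comp hφc)
      · intro c d y z w hw
        exact hφlin c d y z w hw x
    refine ⟨fun x => ⟨fun y => (φ y).1 x, hFx x⟩, ?_, ?_⟩
    · exact Continuous.subtype_mk (continuous_pi fun y => (φ y).2) _
    · intro a ha
      funext y
      exact hφext y ⟨a, ha⟩
  · rintro ⟨ψ, hψc, hψext⟩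
    refine ⟨fun y => ⟨fun x => (ψ x).1 y,
      (continuous_apply y).comp (continuous_subtype_val.comp hψc)⟩, ?_, ?_, ?_⟩
    · exact Continuous.subtype_mk
        (continuous_pi fun x => LSet_continuous _ (ψ x).2) _
    · intro c d y z w hw x
      exact LSet_linear _ (ψ x).2 c d y z w hw
    · intro y a
      show (ψ (a : X)).1 y = y.1 a
      rw [hψext (a : X) a.2]
end

section
/- Let X be a topological space and A ⊆ X. Then there exists a linear continuous mapping φ : C_p*(A) → C_p(X) with φ(y)|_A = y for every y ∈ C_p*(A) if and only if there exists a continuous mapping ψ : X → L*(A) with ψ(a) = π*_A(a) for every a ∈ A. -/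
open Set Topology

/-- `L*(A)`: the linear span of the evaluation functionals `π*_A(a) : C_p*(A) → ℝ`,
`a ∈ A`, viewed as a set of (continuous) functions on `C_p*(A)`; as a subspace of
`C_p(C_p*(A))` its topology is that of pointwise convergence on `C_p*(A)`. -/
def LStarSet (A : Type*) [TopologicalSpace A] : Set (CpStar A → ℝ) :=
  {F | ∃ (n : ℕ) (x : Fin n → A) (α : Fin n → ℝ),
    F = fun y : CpStar A => ∑ i, α i * y.1 (x i)}

namespace StarHelper

variable {A : Type*} [TopologicalSpace A]

/-- linear combination of two bounded continuous functions -/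
noncomputable def comb (c d : ℝ) (y z : CpStar A) : CpStar A :=
  ⟨fun a => c * y.1 a + d * z.1 a, by
    obtain ⟨hy, My, hMy⟩ := y.2
    obtain ⟨hz, Mz, hMz⟩ := z.2
    refine ⟨by fun_prop, |c| * My + |d| * Mz, fun a => ?_⟩
    calc |c * y.1 a + d * z.1 a| ≤ |c * y.1 a| + |d * z.1 a| := abs_add_le _ _
      _ = |c| * |y.1 a| + |d| * |z.1 a| := by rw [abs_mul, abs_mul]
      _ ≤ |c| * My + |d| * Mz := by
          gcongr
          · exact hMy a
          · exact hMz a⟩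

@[simp] lemma comb_apply (c d : ℝ) (y z : CpStar A) (a : A) :
    (comb c d y z).1 a = c * y.1 a + d * z.1 a := rfl

/-- the zero function -/
def zfn : CpStar A := ⟨fun _ => 0, continuous_const, 0, fun _ => by simp⟩

theorem mem_LStarSet_of_continuous_linear (F : CpStar A → ℝ) (hF : Continuous F)
    (hlin : ∀ (c d : ℝ) (y z w : CpStar A),
      (∀ a, w.1 a = c * y.1 a + d * z.1 a) → F w = c * F y + d * F z) :
    F ∈ LStarSet A := by
  classical
  have h0 : F (zfn : CpStar A) = 0 := by
    have := hlin 0 0 zfn zfn zfn (fun a => by simp [zfn])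
    simpa using this
  -- continuity at the zero function
  have hU : F ⁻¹' (Ioo (-1 : ℝ) 1) ∈ 𝓝 (zfn : CpStar A) :=
    hF.continuousAt.preimage_mem_nhds (isOpen_Ioo.mem_nhds (by simp [h0]))
  rw [nhds_induced Subtype.val, Filter.mem_comap] at hU
  obtain ⟨T, hT, hTsub⟩ := hU
  obtain ⟨s, hsT, hsopen, hsmem⟩ := mem_nhds_iff.1 hT
  obtain ⟨I, u, hu, hpi⟩ := isOpen_pi_iff.1 hsopen _ hsmem
  -- the kernel lemma
  have hker : ∀ y : CpStar A, (∀ i ∈ I, y.1 i = 0) → F y = 0 := by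
    intro y hy
    have hall : ∀ t : ℝ, t * F y ∈ Ioo (-1 : ℝ) 1 := by
      intro t
      have hw : (comb t 0 y y).1 ∈ (I : Set A).pi u := by
        intro i hi
        have h0i : (comb t 0 y y).1 i = (0 : ℝ) := by simp [hy i hi]
        rw [h0i]
        have := (hu i hi).2
        simpa [zfn] using this
      have hmem : comb t 0 y y ∈ F ⁻¹' Ioo (-1 : ℝ) 1 := hTsub (hsT (hpi hw))
      have heq := hlin t 0 y y (comb t 0 y y) (fun a => rfl)
      have : F (comb t 0 y y) = t * F y := by rw [heq]; ring
      rwa [Set.mem_preimage, this] at hmem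
    by_contra hne
    have h1 := hall (1 / F y)
    rw [one_div, inv_mul_cancel₀ hne] at h1
    exact absurd h1.2 (lt_irrefl 1)
  have hdiff : ∀ y z : CpStar A, (∀ i ∈ I, y.1 i = z.1 i) → F y = F z := by
    intro y z h
    have hk := hker (comb 1 (-1) y z) (fun i hi => by simp [h i hi])
    have heq := hlin 1 (-1) y z (comb 1 (-1) y z) (fun a => rfl)
    rw [hk] at heq
    linarith
  -- enumerate I
  set n := I.card with hn
  set a : Fin n → A := fun j => (I.equivFin.symm j : A) with ha
  have he_eq : ∀ y z : CpStar A, (∀ j, y.1 (a j) = z.1 (a j)) → F y = F z := by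
    intro y z h
    apply hdiff
    intro i hi
    have := h (I.equivFin ⟨i, hi⟩)
    simpa [ha] using this
  set e : CpStar A → (Fin n → ℝ) := fun y j => y.1 (a j) with he
  have hFe : ∀ y z : CpStar A, e y = e z → F y = F z := by
    intro y z h
    exact he_eq y z fun j => congrFun h j
  set V : Submodule ℝ (Fin n → ℝ) :=
    { carrier := Set.range e
      add_mem' := by
        rintro v w ⟨y, rfl⟩ ⟨z, rfl⟩
        exact ⟨comb 1 1 y z, by funext j; simp [he]⟩
      zero_mem' := ⟨zfn, by funext j; simp [he, zfn]⟩
      smul_mem' := by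
        rintro c v ⟨y, rfl⟩
        exact ⟨comb c 0 y y, by funext j; simp [he]⟩ } with hV
  have hmemV : ∀ y : CpStar A, e y ∈ V := fun y => ⟨y, rfl⟩
  -- pick a preimage for each element of V
  have hpick : ∀ v : V, ∃ y : CpStar A, e y = (v : Fin n → ℝ) := fun v => v.2
  choose pick hpick_spec using hpick
  have hGF : ∀ (v : V) (y : CpStar A), e y = (v : Fin n → ℝ) → F (pick v) = F y := by
    intro v y hy
    exact hFe _ _ (by rw [hpick_spec v, hy])
  set Glin : V →ₗ[ℝ] ℝ :=
    { toFun := fun v => F (pick v)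
      map_add' := by
        intro v w
        have h1 : e (comb 1 1 (pick v) (pick w)) = ((v + w : V) : Fin n → ℝ) := by
          funext j
          have hv := congrFun (hpick_spec v) j
          have hw := congrFun (hpick_spec w) j
          simp only [he] at hv hw
          simp [he, hv, hw]
        have h2 := hGF (v + w) _ h1
        have h3 := hlin 1 1 (pick v) (pick w) (comb 1 1 (pick v) (pick w)) (fun a => rfl)
        rw [h2, h3]; ring
      map_smul' := by
        intro c v
        have h1 : e (comb c 0 (pick v) (pick v)) = ((c • v : V) : Fin n → ℝ) := by
          funext j
          have hv := congrFun (hpick_spec v) j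
          simp only [he] at hv
          simp [he, hv]
        have h2 := hGF (c • v) _ h1
        have h3 := hlin c 0 (pick v) (pick v) (comb c 0 (pick v) (pick v)) (fun a => rfl)
        simp only [RingHom.id_apply]
        rw [h2, h3, smul_eq_mul]; ring } with hG
  obtain ⟨g, hg⟩ := Glin.exists_extend
  refine ⟨n, a, fun i => g (fun j => if i = j then 1 else 0), ?_⟩
  funext y
  have h1 : F y = Glin ⟨e y, hmemV y⟩ := (hGF ⟨e y, hmemV y⟩ y rfl).symm
  have h2 : Glin ⟨e y, hmemV y⟩ = g (e y) := by
    have := LinearMap.ext_iff.1 hg ⟨e y, hmemV y⟩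
    simpa using this.symm
  rw [h1, h2]
  conv_lhs => rw [pi_eq_sum_univ (e y), map_sum]
  refine Finset.sum_congr rfl fun i _ => ?_
  rw [map_smul, smul_eq_mul, mul_comm]

end StarHelper

/-- There is a linear continuous extender `φ : C_p*(A) → C_p(X)` iff there is a
continuous `ψ : X → L*(A)` with `ψ(a) = π*_A(a)` for all `a ∈ A`. -/
theorem stmt_15 {X : Type*} [TopologicalSpace X] (A : Set X) :
    (∃ φ : CpStar A → Cp X, Continuous φ ∧
      (∀ (c d : ℝ) (y z w : CpStar A), (∀ a : A, w.1 a = c * y.1 a + d * z.1 a) →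
        ∀ x : X, (φ w).1 x = c * (φ y).1 x + d * (φ z).1 x) ∧
      (∀ y : CpStar A, ∀ a : A, (φ y).1 a = y.1 a)) ↔
    (∃ ψ : X → LStarSet A, Continuous ψ ∧
      ∀ (a : X) (ha : a ∈ A), (ψ a).1 = fun y : CpStar A => y.1 ⟨a, ha⟩) := by
  classical
  constructor
  · rintro ⟨φ, hφc, hφlin, hφext⟩
    refine ⟨fun x => ⟨fun y => (φ y).1 x, ?_⟩, ?_, ?_⟩
    · exact StarHelper.mem_LStarSet_of_continuous_linear _
        (((continuous_apply x).comp continuous_subtype_val).comp hφc)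
        (fun c d y z w hw => hφlin c d y z w hw x)
    · exact Continuous.subtype_mk (continuous_pi fun y => (φ y).2) _
    · intro a ha
      funext y
      exact hφext y ⟨a, ha⟩
  · rintro ⟨ψ, hψc, hψa⟩
    refine ⟨fun y => ⟨fun x => (ψ x).1 y, ?_⟩, ?_, ?_, ?_⟩
    · exact (continuous_apply y).comp (continuous_subtype_val.comp hψc)
    · refine Continuous.subtype_mk (continuous_pi fun x => ?_) _
      obtain ⟨n, xs, α, h⟩ := (ψ x).2
      simp only [h]
      exact continuous_finset_sum _ fun i _ =>
        continuous_const.mul ((continuous_apply (xs i)).comp continuous_subtype_val)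
    · intro c d y z w hw x
      obtain ⟨n, xs, α, h⟩ := (ψ x).2
      simp only [h, hw]
      rw [Finset.mul_sum, Finset.mul_sum, ← Finset.sum_add_distrib]
      exact Finset.sum_congr rfl fun i _ => by ring
    · intro y a
      have := congrFun (hψa a a.2) y
      simpa using this
end

section
/- Let X be a topological space and let A be a functionally closed subset of X which is well-covered in X. Then A is an L-retract in X, i.e., there exists a continuous mapping ψ : X → L(A) with ψ(a) = π_A(a) for every a ∈ A. -/
open Set Topology

/-- `A` is well-covered in `X`: there are a sequence of locally finite families
`(U n i : i ∈ I n)` of functionally open subsets of `X`, each covering `A`, and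
continuous maps `lam n i : closure (U n i) → A`, such that for every `a ∈ A` and every
neighborhood `V` of `a` in `A` there are `n₀` and a neighborhood `U₀` of `a` in `X`
with `lam n i (U n i ∩ U₀) ⊆ V` for all `n ≥ n₀` and all `i`. -/
def WellCovered.{u, v} {X : Type v} [TopologicalSpace X] (A : Set X) : Prop :=
  ∃ (I : ℕ → Type u) (U : ∀ n, I n → Set X)
    (lam : ∀ (n) (i : I n), closure (U n i) → A),
    (∀ n i, FunctionallyOpen (U n i)) ∧
    (∀ (n) (x : X), ∃ V ∈ 𝓝 x, {i : I n | (V ∩ U n i).Nonempty}.Finite) ∧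
    (∀ n, A ⊆ ⋃ i, U n i) ∧
    (∀ n i, Continuous (lam n i)) ∧
    (∀ (a : X) (ha : a ∈ A), ∀ V : Set A, V ∈ 𝓝 (⟨a, ha⟩ : A) →
      ∃ (n₀ : ℕ) (U₀ : Set X), U₀ ∈ 𝓝 a ∧
        ∀ n ≥ n₀, ∀ (i : I n) (x : X) (hx : x ∈ U n i ∩ U₀),
          lam n i ⟨x, subset_closure hx.1⟩ ∈ V)

/-!
For each level `n`, the locally finite cover `U n` carries functions `f n i ≥ 0` with cozero
sets `U n i` and total mass `s n = ∑ᶠ i, f n i`, positive on `A`. The level average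
`S n y x = ∑ᶠ i, f n i x * y (λ n i x)` is a finite combination of evaluations at points of `A`,
continuous in `x`, and near `a ∈ A` it is close to `s n x * y a` once `n` is large.

Off `A` we glue the levels as `ψ x y = ∑ n, w n x * S n y x`. Using a function `g` with zero
set `A`, the weights are chosen so that locally on `X \ A` only finitely many of them are nonzero,
and so that the masses telescope, `w n * s n = Q n - Q (n + 1)`, with `Q n ≤ 1` continuous and
equal to `1` on `A`. Near `a ∈ A` the levels `n ≥ n₀` therefore carry mass `Q n₀ ≈ 1`, while
the finitely many levels `n < n₀` carry mass `≈ 0`, so `ψ x y ≈ y a`.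
-/

open Function Finset Filter

def LSubmodule (A : Type*) [TopologicalSpace A] : Submodule ℝ (Cp A → ℝ) where
  carrier := LSet A
  zero_mem' := ⟨0, Fin.elim0, Fin.elim0, by funext y; simp⟩
  add_mem' := by
    rintro _ _ ⟨n, x, α, rfl⟩ ⟨m, x', β, rfl⟩
    exact ⟨n + m, Fin.append x x', Fin.append α β, by funext y; simp [Fin.sum_univ_add]⟩
  smul_mem' := by
    rintro c _ ⟨n, x, α, rfl⟩
    exact ⟨n, x, c • α, by funext y; simp [Finset.mul_sum, mul_assoc]⟩

lemma eval_mem_LSubmodule {A : Type*} [TopologicalSpace A] (a : A) :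
    (fun y : Cp A => y.1 a) ∈ LSubmodule A :=
  ⟨1, fun _ => a, fun _ => 1, by funext y; simp⟩

lemma Submodule.finsum_mul_mem {R α ι : Type*} [Semiring R] (p : Submodule R (α → R)) {a : ι → R}
    (ha : (support a).Finite) {e : ι → α → R} (he : ∀ i, e i ∈ p) :
    (fun y => ∑ᶠ i, a i * e i y) ∈ p := by
  have : (fun y => ∑ᶠ i, a i * e i y) = ∑ i ∈ ha.toFinset, a i • e i := by
    funext y
    rw [Finset.sum_apply, finsum_eq_sum_of_support_subset _ fun i hi =>
      ha.mem_toFinset.2 (left_ne_zero_of_mul hi)]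
    simp only [Pi.smul_apply, smul_eq_mul]
  rw [this]
  exact p.sum_mem fun i _ => p.smul_mem _ (he i)

lemma abs_finsum_mul_sub_le {ι : Type*} {a b : ι → ℝ} {c ε : ℝ} (ha : ∀ i, 0 ≤ a i)
    (hfin : (support a).Finite) (hb : ∀ i, a i ≠ 0 → |b i - c| ≤ ε) :
    |∑ᶠ i, a i * b i - (∑ᶠ i, a i) * c| ≤ ε * ∑ᶠ i, a i := by
  rw [finsum_eq_sum_of_support_subset _ fun i hi => hfin.mem_toFinset.2 (left_ne_zero_of_mul hi),
    finsum_eq_sum_of_support_subset _ fun i hi => hfin.mem_toFinset.2 hi, Finset.sum_mul,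
    ← Finset.sum_sub_distrib, Finset.mul_sum]
  calc |∑ i ∈ hfin.toFinset, (a i * b i - a i * c)|
      ≤ ∑ i ∈ hfin.toFinset, |a i * b i - a i * c| := Finset.abs_sum_le_sum_abs _ _
    _ ≤ ∑ i ∈ hfin.toFinset, ε * a i := Finset.sum_le_sum fun i hi => by
        rw [← mul_sub, abs_mul, abs_of_nonneg (ha i), mul_comm]
        exact mul_le_mul_of_nonneg_right (hb i (hfin.mem_toFinset.1 hi)) (ha i)

lemma abs_sum_range_mul_sub_le {w s S Q : ℕ → ℝ} {c ε : ℝ} {n₀ N : ℕ} (hN : n₀ ≤ N)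
    (hε : 0 ≤ ε) (hw : ∀ n, 0 ≤ w n) (hws : ∀ n, w n * s n = Q n - Q (n + 1))
    (hQ : Q n₀ ≤ 1) (hQN : Q N = 0) (hS : ∀ n ≥ n₀, |S n - s n * c| ≤ ε * s n) :
    |∑ n ∈ range N, w n * S n - c| ≤ |∑ n ∈ range n₀, w n * S n| + ε + |c| * |Q n₀ - 1| := by
  have htel : ∑ n ∈ Ico n₀ N, w n * s n = Q n₀ := by
    simp only [hws, ← neg_sub (Q (_ + 1)), Finset.sum_neg_distrib, Finset.sum_Ico_sub Q hN, hQN]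
    ring
  have hmid : |∑ n ∈ Ico n₀ N, w n * S n - c * Q n₀| ≤ ε := by
    rw [← htel, Finset.mul_sum, ← Finset.sum_sub_distrib]
    calc |∑ n ∈ Ico n₀ N, (w n * S n - c * (w n * s n))|
        ≤ ∑ n ∈ Ico n₀ N, |w n * S n - c * (w n * s n)| := Finset.abs_sum_le_sum_abs _ _
      _ ≤ ∑ n ∈ Ico n₀ N, ε * (w n * s n) := Finset.sum_le_sum fun n hn => by
          rw [show w n * S n - c * (w n * s n) = w n * (S n - s n * c) by ring, abs_mul,
            abs_of_nonneg (hw n), mul_left_comm]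
          exact mul_le_mul_of_nonneg_left (hS n (Finset.mem_Ico.1 hn).1) (hw n)
      _ = ε * Q n₀ := by rw [← Finset.mul_sum, htel]
      _ ≤ ε := mul_le_of_le_one_right hε hQ
  calc |∑ n ∈ range N, w n * S n - c|
      = |∑ n ∈ range n₀, w n * S n + (∑ n ∈ Ico n₀ N, w n * S n - c * Q n₀)
          + c * (Q n₀ - 1)| := by
        rw [← Finset.sum_range_add_sum_Ico _ hN]
        congr 1
        ring
    _ ≤ _ := abs_add_three _ _ _
    _ ≤ _ := by rw [abs_mul]; linarith

section ZeroExtend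

variable {X : Type*} {K : Set X}

open Classical in
noncomputable def zeroExtend (h : K → ℝ) (x : X) : ℝ := if hx : x ∈ K then h ⟨x, hx⟩ else 0

lemma zeroExtend_of_mem (h : K → ℝ) {x : X} (hx : x ∈ K) : zeroExtend h x = h ⟨x, hx⟩ := by
  simp [zeroExtend, hx]

lemma zeroExtend_eval_mem_LSubmodule {Y : Type*} [TopologicalSpace Y] (lam : K → Y) (x : X) :
    (fun y : Cp Y => zeroExtend (fun z => y.1 (lam z)) x) ∈ LSubmodule Y := by
  by_cases hx : x ∈ K
  · simp only [zeroExtend_of_mem _ hx]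
    exact eval_mem_LSubmodule _
  · simp only [zeroExtend, hx, dite_false]
    exact (LSubmodule Y).zero_mem

variable [TopologicalSpace X]

lemma continuousOn_zeroExtend {h : K → ℝ} (hh : Continuous h) : ContinuousOn (zeroExtend h) K := by
  rw [continuousOn_iff_continuous_domRestrict]
  convert hh using 1
  funext x
  exact zeroExtend_of_mem h x.2

lemma isBoundedUnder_zeroExtend (hK : IsClosed K) {h : K → ℝ} (hh : Continuous h) (x₀ : X) :
    IsBoundedUnder (· ≤ ·) (𝓝 x₀) ((fun t => ‖t‖) ∘ zeroExtend h) := by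
  have hnear : ∀ᶠ x in 𝓝 x₀, x ∈ K → |zeroExtend h x - zeroExtend h x₀| < 1 := by
    by_cases hx₀ : x₀ ∈ K
    · exact eventually_nhdsWithin_iff.1
        ((continuousOn_zeroExtend hh x₀ hx₀).eventually (Metric.ball_mem_nhds _ one_pos))
    · filter_upwards [hK.isOpen_compl.mem_nhds hx₀] with x hx hxK using absurd hxK hx
  refine isBoundedUnder_of_eventually_le (a := |zeroExtend h x₀| + 1) ?_
  filter_upwards [hnear] with x hx
  rw [comp_apply, Real.norm_eq_abs]
  by_cases hxK : x ∈ K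
  · linarith [hx hxK, abs_sub_abs_le_abs_sub (zeroExtend h x) (zeroExtend h x₀)]
  · simp only [zeroExtend, hxK, dite_false, abs_zero]
    positivity

lemma Continuous.mul_zeroExtend {f : X → ℝ} (hf : Continuous f) (hK : IsClosed K)
    (hfK : support f ⊆ K) {h : K → ℝ} (hh : Continuous h) :
    Continuous fun x => f x * zeroExtend h x := by
  refine continuous_iff_continuousAt.2 fun x₀ => ?_
  by_cases hfx₀ : f x₀ = 0
  · have hf0 : Tendsto f (𝓝 x₀) (𝓝 0) := hfx₀ ▸ hf.tendsto x₀
    simpa [ContinuousAt, hfx₀] using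
      hf0.zero_mul_isBoundedUnder_le (isBoundedUnder_zeroExtend hK hh x₀)
  · have hK₀ : K ∈ 𝓝 x₀ :=
      mem_of_superset ((isOpen_ne_fun hf continuous_const).mem_nhds hfx₀) hfK
    exact hf.continuousAt.mul ((continuousOn_zeroExtend hh).continuousAt hK₀)

lemma continuous_finsum_mul_zeroExtend {ι : Type*} {U : ι → Set X} (hU : LocallyFinite U)
    {f : ι → X → ℝ} (hf : ∀ i, Continuous (f i)) (hfU : ∀ i, support (f i) ⊆ U i)
    {h : ∀ i, closure (U i) → ℝ} (hh : ∀ i, Continuous (h i)) :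
    Continuous fun x => ∑ᶠ i, f i x * zeroExtend (h i) x :=
  continuous_finsum
    (fun i => (hf i).mul_zeroExtend isClosed_closure ((hfU i).trans subset_closure) (hh i))
    (hU.subset fun i _ hx => hfU i (left_ne_zero_of_mul hx))

end ZeroExtend

lemma FunctionallyOpen.exists_nonneg_support_eq {X : Type*} [TopologicalSpace X] {U : Set X}
    (hU : FunctionallyOpen U) : ∃ f : X → ℝ, Continuous f ∧ (∀ x, 0 ≤ f x) ∧ support f = U := by
  obtain ⟨F, hF, rfl⟩ := hU
  exact ⟨fun x => |F x|, hF.abs, fun x => abs_nonneg _, by ext x; simp⟩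

structure TelescopingWeights {X : Type*} [TopologicalSpace X] (A : Set X) (s : ℕ → X → ℝ) where
  w : ℕ → X → ℝ
  Q : ℕ → X → ℝ
  continuous_w : ∀ n, Continuous (w n)
  continuous_Q : ∀ n, Continuous (Q n)
  w_nonneg : ∀ n x, 0 ≤ w n x
  Q_le_one : ∀ n x, Q n x ≤ 1
  w_of_mem : ∀ n, ∀ x ∈ A, w n x = 0
  Q_of_mem : ∀ n, ∀ x ∈ A, Q n x = 1
  eventually_eq_zero : ∀ x ∉ A, ∃ N, ∀ᶠ z in 𝓝 x, ∀ n ≥ N, w n z = 0 ∧ Q n z = 0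
  w_mul : ∀ n x, w n x * s n x = Q n x - Q (n + 1) x

namespace TelescopingWeights

variable {X : Type*}

def cutoff (g : X → ℝ) (n : ℕ) (x : X) : ℝ := max 0 (1 - n * |g x|)

lemma continuous_cutoff [TopologicalSpace X] {g : X → ℝ} (hg : Continuous g) (n : ℕ) :
    Continuous (cutoff g n) := by
  unfold cutoff
  fun_prop

lemma cutoff_nonneg (g : X → ℝ) (n : ℕ) (x : X) : 0 ≤ cutoff g n x := le_max_left _ _

lemma cutoff_le_one (g : X → ℝ) (n : ℕ) (x : X) : cutoff g n x ≤ 1 :=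
  max_le zero_le_one (sub_le_self _ (by positivity))

lemma cutoff_of_eq_zero {g : X → ℝ} {x : X} (hx : g x = 0) (n : ℕ) : cutoff g n x = 1 := by
  simp [cutoff, hx]

lemma eventually_cutoff_eq_zero [TopologicalSpace X] {g : X → ℝ} (hg : Continuous g) {x : X}
    (hx : g x ≠ 0) :
    ∃ N, ∀ᶠ z in 𝓝 x, ∀ n ≥ N, cutoff g n z = 0 := by
  have hgx : 0 < |g x| := abs_pos.2 hx
  refine ⟨⌈2 / |g x|⌉₊, ?_⟩
  filter_upwards [(hg.abs.tendsto x).eventually_const_lt (half_lt_self hgx)] with z hz n hn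
  have hn' : 2 ≤ n * |g x| := (div_le_iff₀ hgx).1 (Nat.ceil_le.1 hn)
  have := mul_le_mul_of_nonneg_left hz.le n.cast_nonneg (α := ℝ)
  exact max_eq_left (by linarith)

noncomputable def damping (g : X → ℝ) (s : ℕ → X → ℝ) (n : ℕ) (x : X) : ℝ :=
  s n x * cutoff g n x / (s n x + |g x|)

variable {g : X → ℝ} {s : ℕ → X → ℝ}

lemma add_abs_pos (hs0 : ∀ n x, 0 ≤ s n x) (hsg : ∀ n x, g x = 0 → 0 < s n x) (n : ℕ) (x : X) :
    0 < s n x + |g x| := by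
  rcases eq_or_ne (g x) 0 with h | h
  · simpa [h] using hsg n x h
  · exact add_pos_of_nonneg_of_pos (hs0 n x) (abs_pos.2 h)

lemma continuous_damping [TopologicalSpace X] (hg : Continuous g) (hs : ∀ n, Continuous (s n))
    (hpos : ∀ n x, 0 < s n x + |g x|) (n : ℕ) : Continuous (damping g s n) :=
  ((hs n).mul (continuous_cutoff hg n)).div ((hs n).add hg.abs) fun x => (hpos n x).ne'

lemma damping_nonneg (hs0 : ∀ n x, 0 ≤ s n x) (n : ℕ) (x : X) : 0 ≤ damping g s n x :=
  div_nonneg (mul_nonneg (hs0 n x) (cutoff_nonneg g n x)) (add_nonneg (hs0 n x) (abs_nonneg _))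

lemma damping_le_one (hs0 : ∀ n x, 0 ≤ s n x) (n : ℕ) (x : X) : damping g s n x ≤ 1 :=
  div_le_one_of_le₀
    ((mul_le_of_le_one_right (hs0 n x) (cutoff_le_one g n x)).trans (le_add_of_nonneg_right
      (abs_nonneg _)))
    (add_nonneg (hs0 n x) (abs_nonneg _))

lemma damping_of_eq_zero (hsg : ∀ n x, g x = 0 → 0 < s n x) {x : X} (hx : g x = 0) (n : ℕ) :
    damping g s n x = 1 := by
  rw [damping, cutoff_of_eq_zero hx, hx, abs_zero, add_zero, mul_one, div_self (hsg n x hx).ne']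

lemma damping_of_cutoff_eq_zero {n : ℕ} {x : X} (h : cutoff g n x = 0) : damping g s n x = 0 := by
  simp [damping, h]

end TelescopingWeights

open TelescopingWeights in
lemma nonempty_telescopingWeights {X : Type*} [TopologicalSpace X] {A : Set X}
    (hA : FunctionallyOpen Aᶜ) {s : ℕ → X → ℝ} (hs : ∀ n, Continuous (s n))
    (hs0 : ∀ n x, 0 ≤ s n x) (hsA : ∀ n, ∀ x ∈ A, 0 < s n x) :
    Nonempty (TelescopingWeights A s) := by
  obtain ⟨g, hg, hgA⟩ := hA
  have hzero : ∀ x, g x = 0 ↔ x ∈ A := fun x => by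
    simpa [not_iff_not] using (Set.ext_iff.1 hgA x).symm
  have hsg : ∀ n x, g x = 0 → 0 < s n x := fun n x hx => hsA n x ((hzero x).1 hx)
  have hpos := add_abs_pos hs0 hsg
  have hδ := continuous_damping hg hs hpos
  have hδ0 := damping_nonneg (g := g) hs0
  have hδ1 := damping_le_one (g := g) hs0
  exact ⟨{
    -- `(Q n - Q (n + 1)) / s n`, written without dividing by `s n`, which may vanish
    w := fun n x => (∏ k ∈ range n, damping g s k x) * cutoff g n x / (s n x + |g x|)
      * (1 - damping g s (n + 1) x)
    Q := fun n x => ∏ k ∈ range (n + 1), damping g s k x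
    continuous_w := fun n =>
      (((continuous_finsetProd _ fun k _ => hδ k).mul (continuous_cutoff hg n)).div
        ((hs n).add hg.abs) fun x => (hpos n x).ne').mul (continuous_const.sub (hδ _))
    continuous_Q := fun n => continuous_finsetProd _ fun k _ => hδ k
    w_nonneg := fun n x => mul_nonneg (div_nonneg (mul_nonneg
      (prod_nonneg fun k _ => hδ0 k x) (cutoff_nonneg g n x)) (hpos n x).le)
      (sub_nonneg.2 (hδ1 _ x))
    Q_le_one := fun n x => prod_le_one (fun k _ => hδ0 k x) fun k _ => hδ1 k x
    w_of_mem := fun n x hx => by simp [damping_of_eq_zero hsg ((hzero x).2 hx)]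
    Q_of_mem := fun n x hx => prod_eq_one fun k _ => damping_of_eq_zero hsg ((hzero x).2 hx) k
    eventually_eq_zero := fun x hx => by
      obtain ⟨N, hN⟩ := eventually_cutoff_eq_zero hg (mt (hzero x).1 hx)
      exact ⟨N, hN.mono fun z hz n hn => ⟨by simp [hz n hn],
        prod_eq_zero (self_mem_range_succ n) (damping_of_cutoff_eq_zero (hz n hn))⟩⟩
    w_mul := fun n x => by
      simp only [prod_range_succ, damping]
      ring }⟩

structure LevelAverages {X : Type*} [TopologicalSpace X] (A : Set X) where
  s : ℕ → X → ℝ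
  S : ℕ → Cp A → X → ℝ
  continuous_s : ∀ n, Continuous (s n)
  s_nonneg : ∀ n x, 0 ≤ s n x
  s_pos : ∀ n, ∀ x ∈ A, 0 < s n x
  continuous_S : ∀ n y, Continuous (S n y)
  S_mem : ∀ n x, (fun y => S n y x) ∈ LSubmodule A
  eventually_abs_S_sub_le : ∀ (a : X) (ha : a ∈ A) (y : Cp A) (ε : ℝ), 0 < ε →
    ∃ n₀, ∀ᶠ x in 𝓝 a, ∀ n ≥ n₀, |S n y x - s n x * y.1 ⟨a, ha⟩| ≤ ε * s n x

lemma nonempty_levelAverages {X : Type*} [TopologicalSpace X] {A : Set X}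
    (hwc : WellCovered.{u} A) : Nonempty (LevelAverages A) := by
  obtain ⟨I, U, lam, hUo, hUlf, hUcov, hlam, hconv⟩ := hwc
  choose f hf hf0 hfU using fun n i => (hUo n i).exists_nonneg_support_eq
  have hlf : ∀ n, LocallyFinite (U n) := fun n x => by
    obtain ⟨V, hV, hfin⟩ := hUlf n x
    exact ⟨V, hV, by simpa only [inter_comm] using hfin⟩
  have hfin : ∀ n x, (support fun i => f n i x).Finite := fun n x =>
    ((hlf n).point_finite x).subset fun i hi => (hfU n i).subset hi
  refine ⟨{
    s := fun n x => ∑ᶠ i, f n i x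
    S := fun n y x => ∑ᶠ i, f n i x * zeroExtend (fun z => y.1 (lam n i z)) x
    continuous_s := fun n => continuous_finsum (hf n) (by simpa only [hfU] using hlf n)
    s_nonneg := fun n x => finsum_nonneg fun i => hf0 n i x
    s_pos := fun n x hx => ?_
    continuous_S := fun n y => continuous_finsum_mul_zeroExtend (hlf n) (hf n)
      (fun i => (hfU n i).subset) fun i => y.2.comp (hlam n i)
    S_mem := fun n x =>
      (LSubmodule A).finsum_mul_mem (hfin n x) fun i => zeroExtend_eval_mem_LSubmodule _ x
    eventually_abs_S_sub_le := fun a ha y ε hε => ?_ }⟩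
  · obtain ⟨_, ⟨i, rfl⟩, hi⟩ := hUcov n hx
    have hfi : 0 < f n i x := (hf0 n i x).lt_of_ne (Ne.symm ((hfU n i).superset hi))
    exact hfi.trans_le (single_le_finsum i (hfin n x) fun j => hf0 n j x)
  · obtain ⟨n₀, U₀, hU₀, hn₀⟩ :=
      hconv a ha _ (y.2.continuousAt.preimage_mem_nhds (Metric.ball_mem_nhds _ hε))
    refine ⟨n₀, ?_⟩
    filter_upwards [hU₀] with x hx n hn
    refine abs_finsum_mul_sub_le (hf0 n · x) (hfin n x) fun i hi => ?_
    have hxU : x ∈ U n i := (hfU n i).subset hi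
    rw [zeroExtend_of_mem _ (subset_closure hxU), ← Real.dist_eq]
    exact (hn₀ n hn i x ⟨hxU, hx⟩).le

namespace LevelAverages

variable {X : Type*} [TopologicalSpace X] {A : Set X} (L : LevelAverages A)
  (W : TelescopingWeights A L.s)

open Classical in
noncomputable def glue (x : X) (y : Cp A) : ℝ :=
  if hx : x ∈ A then y.1 ⟨x, hx⟩ else ∑ᶠ n, W.w n x * L.S n y x

lemma glue_of_mem {a : X} (ha : a ∈ A) : L.glue W a = fun y => y.1 ⟨a, ha⟩ :=
  funext fun _ => dif_pos ha

lemma glue_of_notMem {x : X} (hx : x ∉ A) {N : ℕ} (hN : ∀ n ≥ N, W.w n x = 0) (y : Cp A) :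
    L.glue W x y = ∑ n ∈ range N, W.w n x * L.S n y x := by
  rw [glue, dif_neg hx]
  refine finsum_eq_sum_of_support_subset _ fun n hn =>
    mem_coe.2 (mem_range.2 (not_le.1 fun h => hn ?_))
  simp [hN n h]

lemma glue_mem (x : X) : L.glue W x ∈ LSubmodule A := by
  by_cases hx : x ∈ A
  · rw [L.glue_of_mem W hx]
    exact eval_mem_LSubmodule _
  · obtain ⟨N, hN⟩ := W.eventually_eq_zero x hx
    have hfin : (support fun n => W.w n x).Finite :=
      (finite_Iio N).subset fun n hn => not_le.1 fun h => hn (hN.self_of_nhds n h).1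
    have : L.glue W x = fun y => ∑ᶠ n, W.w n x * L.S n y x := funext fun _ => dif_neg hx
    rw [this]
    exact (LSubmodule A).finsum_mul_mem hfin (L.S_mem · x)

lemma continuousAt_glue_of_notMem (y : Cp A) {a : X} (ha : a ∉ A) :
    ContinuousAt (fun x => L.glue W x y) a := by
  obtain ⟨N, hN⟩ := W.eventually_eq_zero a ha
  have hcont : Continuous fun x => ∑ n ∈ range N, W.w n x * L.S n y x :=
    continuous_finsetSum _ fun n _ => (W.continuous_w n).mul (L.continuous_S n y)
  refine hcont.continuousAt.congr ?_
  filter_upwards [hN] with x hx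
  have hxA : x ∉ A := fun hxA => by simpa [W.Q_of_mem N x hxA] using (hx N le_rfl).2
  exact (L.glue_of_notMem W hxA (fun n hn => (hx n hn).1) y).symm

lemma abs_glue_sub_le {x : X} (hx : x ∉ A) {y : Cp A} {c ε : ℝ} (hε : 0 ≤ ε) {n₀ : ℕ}
    (hS : ∀ n ≥ n₀, |L.S n y x - L.s n x * c| ≤ ε * L.s n x) :
    |L.glue W x y - c| ≤ |∑ n ∈ range n₀, W.w n x * L.S n y x| + ε + |c| * |W.Q n₀ x - 1| := by
  obtain ⟨N, hN⟩ := W.eventually_eq_zero x hx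
  have hN' : ∀ n ≥ max N n₀, W.w n x = 0 ∧ W.Q n x = 0 := fun n hn =>
    hN.self_of_nhds n (le_of_max_le_left hn)
  rw [L.glue_of_notMem W hx fun n hn => (hN' n hn).1]
  exact abs_sum_range_mul_sub_le (le_max_right N n₀) hε (W.w_nonneg · x) (W.w_mul · x)
    (W.Q_le_one n₀ x) (hN' _ le_rfl).2 hS

lemma continuousAt_glue_of_mem (y : Cp A) {a : X} (ha : a ∈ A) :
    ContinuousAt (fun x => L.glue W x y) a := by
  have hval : L.glue W a y = y.1 ⟨a, ha⟩ := by rw [L.glue_of_mem W ha]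
  rw [ContinuousAt, hval, Metric.tendsto_nhds]
  intro ε hε
  set c := y.1 ⟨a, ha⟩
  obtain ⟨n₀, hn₀⟩ := L.eventually_abs_S_sub_le a ha y (ε / 4) (by positivity)
  have hlow : ∀ᶠ x in 𝓝 a, |∑ n ∈ range n₀, W.w n x * L.S n y x| < ε / 4 := by
    refine ContinuousAt.eventually_lt ?_ continuousAt_const ?_
    · exact (continuous_finsetSum _ fun n _ =>
        (W.continuous_w n).mul (L.continuous_S n y)).abs.continuousAt
    · simp [W.w_of_mem _ a ha]
      positivity
  have hQ : ∀ᶠ x in 𝓝 a, |c| * |W.Q n₀ x - 1| < ε / 4 := by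
    refine ContinuousAt.eventually_lt ?_ continuousAt_const ?_
    · exact (continuous_const.mul ((W.continuous_Q n₀).sub continuous_const).abs).continuousAt
    · simp [W.Q_of_mem _ a ha]
      positivity
  have hA : ∀ᶠ x in 𝓝 a, ∀ hx : x ∈ A, y.1 ⟨x, hx⟩ ∈ Metric.ball c ε := by
    have := y.2.continuousAt (x := ⟨a, ha⟩) |>.eventually_mem (Metric.ball_mem_nhds c hε)
    rw [nhds_subtype_eq_comap, eventually_comap] at this
    filter_upwards [this] with x hx hxA using hx ⟨x, hxA⟩ rfl
  filter_upwards [hlow, hQ, hA, hn₀] with x hlow hQ hA hS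
  by_cases hx : x ∈ A
  · simpa [L.glue_of_mem W hx] using hA hx
  · rw [Real.dist_eq]
    linarith [L.abs_glue_sub_le W hx (by positivity) hS]

lemma continuous_glue : Continuous (L.glue W) := by
  refine continuous_pi fun y => continuous_iff_continuousAt.2 fun a => ?_
  by_cases ha : a ∈ A
  · exact L.continuousAt_glue_of_mem W y ha
  · exact L.continuousAt_glue_of_notMem W y ha

end LevelAverages

/-- Theorem 4.3: a well-covered functionally closed subset `A` of `X` is an
`L`-retract in `X`: there is a continuous `ψ : X → L(A)` with `ψ(a) = π_A(a)` on `A`. -/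
theorem stmt_17 {X : Type v} [TopologicalSpace X] (A : Set X)
    (hA : FunctionallyOpen Aᶜ) (hwc : WellCovered.{u} A) :
    ∃ ψ : X → LSet A, Continuous ψ ∧
      ∀ (a : X) (ha : a ∈ A), (ψ a).1 = fun y : Cp A => y.1 ⟨a, ha⟩ := by
  obtain ⟨L⟩ := nonempty_levelAverages hwc
  obtain ⟨W⟩ := nonempty_telescopingWeights hA L.continuous_s L.s_nonneg L.s_pos
  exact ⟨fun x => ⟨L.glue W x, L.glue_mem W x⟩, (L.continuous_glue W).subtype_mk _,
    fun a ha => L.glue_of_mem W ha⟩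
end

section
/- Let X be a paracompact perfectly normal topological space (every closed subset of X is a zero set, equivalently every open subset is functionally open) admitting a stratification, i.e., an assignment G of an open set G(n,H) ⊆ X to each n ∈ ℕ and each closed set H ⊆ X such that H ⊆ G(n,H), H = ⋂_{n∈ℕ} closure(G(n,H)), G(n,H) ⊆ G(n,K) whenever H ⊆ K are closed and n ∈ ℕ, and G(n+1,H) ⊆ G(n,H) for all n and closed H. Then every closed subset A ⊆ X is well-covered in X. -/
open Set Topology

/-- Proposition 4.4: in a paracompact perfectly normal (every open set is functionally
open) space admitting a stratification `G`, every closed subset is well-covered. -/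
theorem stmt_19 {X : Type u} [TopologicalSpace X] [ParacompactSpace X]
    (hperf : ∀ U : Set X, IsOpen U → FunctionallyOpen U)
    (G : ℕ → Set X → Set X)
    (hopen : ∀ (n) (H : Set X), IsClosed H → IsOpen (G n H))
    (hsub : ∀ (n) (H : Set X), IsClosed H → H ⊆ G n H)
    (hcap : ∀ H : Set X, IsClosed H → H = ⋂ n, closure (G n H))
    (hmono : ∀ (n) (H K : Set X), IsClosed H → IsClosed K → H ⊆ K → G n H ⊆ G n K)
    (hanti : ∀ (n) (H : Set X), IsClosed H → G (n + 1) H ⊆ G n H) :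
    ∀ A : Set X, IsClosed A → WellCovered.{u} A := by
  intro A hA
  -- the basic closed sets
  set H : ↥A → Set X := fun b => closure {(b : X)} ∩ A with hHdef
  have hHcl : ∀ b : ↥A, IsClosed (H b) := fun b => isClosed_closure.inter hA
  -- cover of X at stage n
  have hcover : ∀ n : ℕ, ∃ v : Option ↥A → Set X,
      (∀ i, IsOpen (v i)) ∧ (⋃ i, v i) = univ ∧ LocallyFinite v ∧
      ∀ i, v i ⊆ (fun i => Option.elim i Aᶜ (fun b => G n (H b))) i := by
    intro n
    apply precise_refinement
    · rintro (_ | b)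
      · exact hA.isOpen_compl
      · exact hopen n (H b) (hHcl b)
    · apply eq_univ_of_forall
      intro x
      by_cases hx : x ∈ A
      · exact mem_iUnion.2 ⟨some ⟨x, hx⟩,
          hsub n _ (hHcl ⟨x, hx⟩) ⟨subset_closure rfl, hx⟩⟩
      · exact mem_iUnion.2 ⟨none, hx⟩
  choose v hvopen hvcov hvlf hvsub using hcover
  -- antitone chain of the stratification
  have hchain : ∀ (K : Set X), IsClosed K → ∀ m n : ℕ, m ≤ n → G n K ⊆ G m K := by
    intro K hK m n hmn
    induction n with
    | zero => simpa [Nat.le_zero.1 hmn]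
    | succ k ih =>
      rcases Nat.lt_or_ge m (k+1) with h | h
      · exact (hanti k K hK).trans (ih (Nat.lt_succ_iff.1 h))
      · have : m = k + 1 := le_antisymm hmn h
        simp [this]
  refine ⟨fun _ => ↥A, fun n b => v n (some b), fun n b _ => b, ?_, ?_, ?_, ?_, ?_⟩
  · intro n b
    exact hperf _ (hvopen n (some b))
  · intro n x
    obtain ⟨W, hW, hfin⟩ := hvlf n x
    refine ⟨W, hW, Set.Finite.subset (hfin.preimage (Option.some_injective ↥A).injOn) ?_⟩
    intro b hb
    simpa [Set.inter_comm] using hb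
  · intro n x hx
    have : x ∈ ⋃ i, v n i := (hvcov n).symm ▸ mem_univ x
    rcases mem_iUnion.1 this with ⟨i, hi⟩
    cases i with
    | none => exact absurd hx (hvsub n none hi)
    | some b => exact mem_iUnion.2 ⟨b, hi⟩
  · intro n b
    exact continuous_const
  · intro a ha V hV
    rw [mem_nhds_induced] at hV
    obtain ⟨t, ht, hts⟩ := hV
    set W := interior t with hWdef
    have haW : a ∈ W := mem_interior_iff_mem_nhds.2 ht
    set K : Set X := A \ W with hKdef
    have hKcl : IsClosed K := hA.sdiff isOpen_interior
    have haK : a ∉ K := fun h => h.2 haW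
    have : a ∉ ⋂ m, closure (G m K) := by rw [← hcap K hKcl]; exact haK
    rw [mem_iInter] at this
    push_neg at this
    obtain ⟨n₀, hn₀⟩ := this
    refine ⟨n₀, (closure (G n₀ K))ᶜ, ?_, ?_⟩
    · exact IsOpen.mem_nhds isClosed_closure.isOpen_compl hn₀
    · intro n hn b x hx
      by_cases hbW : (b : X) ∈ W
      · exact hts (by simpa using mem_of_mem_of_subset hbW interior_subset)
      · exfalso
        -- then H b ⊆ K
        have hHK : H b ⊆ K := by
          rintro y ⟨hy1, hy2⟩
          refine ⟨hy2, fun hyW => ?_⟩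
          have := mem_closure_iff.1 hy1 W isOpen_interior hyW
          rcases this with ⟨z, hz1, hz2⟩
          exact hbW (by rwa [← hz2])
        have hx1 : x ∈ G n (H b) := hvsub n (some b) hx.1
        have hx2 : x ∈ G n K := hmono n (H b) K (hHcl b) hKcl hHK hx1
        have hx3 : x ∈ G n₀ K := hchain K hKcl n₀ n hn hx2
        exact hx.2 (subset_closure hx3)
end
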